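/- arXiv:2605.22307 — 3 statements merged into one kernel-verified Lean document; each statement's English description precedes it below -/
import Mathlib

section
/- For all integers n ≥ 4 and 2 ≤ t ≤ n−3, the weak (2n−2t)-metric dimension of K_n × K_n equals n² − tn. -/
open Finset

/-- Distance in the direct product `K_n × K_n` (per the distance formula):
`0` if equal, `1` if the two vertices differ in both coordinates, `2` otherwise. -/
def dd {n : ℕ} (x y : Fin n × Fin n) : ℕ :=
  if x = y then 0 else if x.1 ≠ y.1 ∧ x.2 ≠ y.2 then 1 else 2

/-- `Δ_S(x,y) = Σ_{z ∈ S} |d(x,z) − d(y,z)|`. -/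
def delS {n : ℕ} (S : Finset (Fin n × Fin n)) (x y : Fin n × Fin n) : ℕ :=
  ∑ z ∈ S, ((dd x z : ℤ) - (dd y z : ℤ)).natAbs

/-- `S` is a weak `k`-resolving set. -/
def weakRes {n : ℕ} (k : ℕ) (S : Finset (Fin n × Fin n)) : Prop :=
  ∀ x y : Fin n × Fin n, x ≠ y → k ≤ delS S x y

/-- The weak `k`-metric dimension of `K_n × K_n`. -/
noncomputable def wdim (n k : ℕ) : ℕ :=
  sInf {m | ∃ S : Finset (Fin n × Fin n), weakRes k S ∧ S.card = m}

/-- Vertical layer `L_i`. -/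
def Lv {n : ℕ} (i : Fin n) : Finset (Fin n × Fin n) := univ.filter (fun p => p.1 = i)

/-- Horizontal layer `L^j`. -/
def Lh {n : ℕ} (j : Fin n) : Finset (Fin n × Fin n) := univ.filter (fun p => p.2 = j)

/-- Intersecting layers `L_i^j = L_i ∪ L^j`. -/
def Lij {n : ℕ} (i j : Fin n) : Finset (Fin n × Fin n) := Lv i ∪ Lh j

section aux
variable {n : ℕ}

lemma ptC (a b c : Fin n) (hac : a ≠ c) (z : Fin n × Fin n) :
    ((dd (a,b) z : ℤ) - (dd (c,b) z : ℤ)).natAbs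
    = ((if z.1 = a then 1 else 0) + (if z.1 = c then 1 else 0)
      + ((if z = (a,b) then 1 else 0) + (if z = (c,b) then 1 else 0))) := by
  obtain ⟨u, v⟩ := z
  simp only [dd, Prod.mk.injEq, Prod.ext_iff, ne_eq]
  split_ifs <;> omega

lemma ptA (a b c d : Fin n) (hac : a ≠ c) (hbd : b ≠ d) (z : Fin n × Fin n) :
    ((dd (a,b) z : ℤ) - (dd (c,d) z : ℤ)).natAbs
    = ((if z.1 = a ∧ z.2 ≠ d then 1 else 0) + (if z.1 ≠ a ∧ z.1 ≠ c ∧ z.2 = b then 1 else 0)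
      + ((if z.1 = c ∧ z.2 ≠ b then 1 else 0) + (if z.1 ≠ c ∧ z.1 ≠ a ∧ z.2 = d then 1 else 0))) := by
  obtain ⟨u, v⟩ := z
  simp only [dd, Prod.mk.injEq, Prod.ext_iff, ne_eq]
  split_ifs <;> omega

def rowIn (S : Finset (Fin n × Fin n)) (b : Fin n) : ℕ :=
  (univ.filter (fun i : Fin n => (i, b) ∈ S)).card
def colIn (S : Finset (Fin n × Fin n)) (a : Fin n) : ℕ :=
  (univ.filter (fun j : Fin n => (a, j) ∈ S)).card

lemma rowfilter_card (S : Finset (Fin n × Fin n)) (b : Fin n) :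
    (S.filter (fun z => z.2 = b)).card = rowIn S b := by
  apply Finset.card_nbij' (i := fun z => z.1) (j := fun i => (i, b)) <;> simp +contextual [Set.MapsTo, Set.LeftInvOn, Set.RightInvOn, Set.EqOn]
  · rintro ⟨u,v⟩ h hv heq; subst heq; exact hv

lemma colfilter_card (S : Finset (Fin n × Fin n)) (a : Fin n) :
    (S.filter (fun z => z.1 = a)).card = colIn S a := by
  apply Finset.card_nbij' (i := fun z => z.2) (j := fun j => (a, j)) <;> simp +contextual [Set.MapsTo, Set.LeftInvOn, Set.RightInvOn, Set.EqOn]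
  · rintro ⟨u,v⟩ h hv heq; subst heq; exact hv

lemma ptB (a b d : Fin n) (hbd : b ≠ d) (z : Fin n × Fin n) :
    ((dd (a,b) z : ℤ) - (dd (a,d) z : ℤ)).natAbs
    = ((if z.2 = b then 1 else 0) + (if z.2 = d then 1 else 0)
      + ((if z = (a,b) then 1 else 0) + (if z = (a,d) then 1 else 0))) := by
  obtain ⟨u, v⟩ := z
  simp only [dd, Prod.mk.injEq, Prod.ext_iff, ne_eq]
  split_ifs <;> omega

lemma delB_eq (S : Finset (Fin n × Fin n)) (a b d : Fin n) (hbd : b ≠ d) :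
    delS S (a,b) (a,d) = rowIn S b + rowIn S d
      + ((if (a,b) ∈ S then 1 else 0) + (if (a,d) ∈ S then 1 else 0)) := by
  unfold delS
  rw [Finset.sum_congr rfl (fun z _ => ptB a b d hbd z)]
  rw [Finset.sum_add_distrib, Finset.sum_add_distrib, Finset.sum_add_distrib]
  rw [show (∑ z ∈ S, if z.2 = b then 1 else 0) = rowIn S b by
      rw [← Finset.card_filter, rowfilter_card]]
  rw [show (∑ z ∈ S, if z.2 = d then 1 else 0) = rowIn S d by
      rw [← Finset.card_filter, rowfilter_card]]
  rw [Finset.sum_ite_eq' S (a,b) (fun _ => 1), Finset.sum_ite_eq' S (a,d) (fun _ => 1)]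

lemma delC_eq (S : Finset (Fin n × Fin n)) (a b c : Fin n) (hac : a ≠ c) :
    delS S (a,b) (c,b) = colIn S a + colIn S c
      + ((if (a,b) ∈ S then 1 else 0) + (if (c,b) ∈ S then 1 else 0)) := by
  unfold delS
  rw [Finset.sum_congr rfl (fun z _ => ptC a b c hac z)]
  rw [Finset.sum_add_distrib, Finset.sum_add_distrib, Finset.sum_add_distrib]
  rw [show (∑ z ∈ S, if z.1 = a then 1 else 0) = colIn S a by
      rw [← Finset.card_filter, colfilter_card]]
  rw [show (∑ z ∈ S, if z.1 = c then 1 else 0) = colIn S c by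
      rw [← Finset.card_filter, colfilter_card]]
  rw [Finset.sum_ite_eq' S (a,b) (fun _ => 1), Finset.sum_ite_eq' S (c,b) (fun _ => 1)]

lemma delA_eq (S : Finset (Fin n × Fin n)) (a b c d : Fin n) (hac : a ≠ c) (hbd : b ≠ d) :
    delS S (a,b) (c,d) = (S.filter (fun z => z.1 = a ∧ z.2 ≠ d)).card
      + (S.filter (fun z => z.1 ≠ a ∧ z.1 ≠ c ∧ z.2 = b)).card
      + ((S.filter (fun z => z.1 = c ∧ z.2 ≠ b)).card
      + (S.filter (fun z => z.1 ≠ c ∧ z.1 ≠ a ∧ z.2 = d)).card) := by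
  unfold delS
  rw [Finset.sum_congr rfl (fun z _ => ptA a b c d hac hbd z)]
  rw [Finset.sum_add_distrib, Finset.sum_add_distrib, Finset.sum_add_distrib]
  rw [← Finset.card_filter, ← Finset.card_filter, ← Finset.card_filter, ← Finset.card_filter]

lemma bd1 (S : Finset (Fin n × Fin n)) (a d : Fin n) :
    colIn S a ≤ (S.filter (fun z => z.1 = a ∧ z.2 ≠ d)).card + 1 := by
  rw [← colfilter_card]
  have hsub : S.filter (fun z => z.1 = a) ⊆ (S.filter (fun z => z.1 = a ∧ z.2 ≠ d)) ∪ {(a,d)} := by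
    intro z hz
    simp only [mem_filter, mem_union, mem_singleton] at *
    by_cases h : z.2 = d
    · right; exact Prod.ext hz.2 h
    · left; exact ⟨hz.1, hz.2, h⟩
  calc (S.filter (fun z => z.1 = a)).card
      ≤ ((S.filter (fun z => z.1 = a ∧ z.2 ≠ d)) ∪ {(a,d)}).card := Finset.card_le_card hsub
    _ ≤ _ := by
        refine (Finset.card_union_le _ _).trans ?_
        simp

lemma bd2 (S : Finset (Fin n × Fin n)) (a b c : Fin n) :
    rowIn S b ≤ (S.filter (fun z => z.1 ≠ a ∧ z.1 ≠ c ∧ z.2 = b)).card + 2 := by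
  rw [← rowfilter_card]
  have hsub : S.filter (fun z => z.2 = b) ⊆
      (S.filter (fun z => z.1 ≠ a ∧ z.1 ≠ c ∧ z.2 = b)) ∪ {(a,b), (c,b)} := by
    intro z hz
    simp only [mem_filter, mem_union, mem_insert, mem_singleton] at *
    by_cases h1 : z.1 = a
    · right; left; exact Prod.ext h1 hz.2
    by_cases h2 : z.1 = c
    · right; right; exact Prod.ext h2 hz.2
    · left; exact ⟨hz.1, h1, h2, hz.2⟩
  calc (S.filter (fun z => z.2 = b)).card
      ≤ _ := Finset.card_le_card hsub
    _ ≤ _ := by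
        refine (Finset.card_union_le _ _).trans ?_
        have : ({(a,b), (c,b)} : Finset (Fin n × Fin n)).card ≤ 2 :=
          (Finset.card_insert_le _ _).trans (by simp)
        omega

end aux

section constructionS
variable {n t : ℕ}

def S0 (n t : ℕ) : Finset (Fin n × Fin n) :=
  univ.filter (fun z : Fin n × Fin n => t ≤ ((z.2 - z.1 : Fin n) : ℕ))

lemma card_val_lt (htn : t < n) :
    (univ.filter (fun w : Fin n => (w : ℕ) < t)).card = t := by
  have h : (univ.filter (fun w : Fin n => (w : ℕ) < t)) = Finset.Iio ⟨t, htn⟩ := by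
    ext w; simp [Fin.lt_def]
  rw [h, Fin.card_Iio]

lemma rowIn_S0 [NeZero n] (htn : t < n) (b : Fin n) : rowIn (S0 n t) b = n - t := by
  have h1 : (univ.filter (fun i : Fin n => ((b - i : Fin n) : ℕ) < t)).card = t := by
    have e : (univ.filter (fun i : Fin n => ((b - i : Fin n) : ℕ) < t)).card
        = (univ.filter (fun w : Fin n => (w : ℕ) < t)).card :=
      Finset.card_nbij' (i := fun i => b - i) (j := fun w => b - w)
        (hi := by simp [Set.MapsTo, Set.LeftInvOn, Set.RightInvOn, Set.EqOn]) (hj := by simp [Set.MapsTo, Set.LeftInvOn, Set.RightInvOn, Set.EqOn])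
        (left_inv := by simp [sub_sub_cancel, Set.MapsTo, Set.LeftInvOn, Set.RightInvOn, Set.EqOn]) (right_inv := by simp [sub_sub_cancel, Set.MapsTo, Set.LeftInvOn, Set.RightInvOn, Set.EqOn])
    rw [e, card_val_lt htn]
  have h2 := Finset.card_filter_add_card_filter_not
    (s := (univ : Finset (Fin n))) (p := fun i : Fin n => ((b - i : Fin n) : ℕ) < t)
  have h3 : rowIn (S0 n t) b
      = (univ.filter (fun i : Fin n => ¬ ((b - i : Fin n) : ℕ) < t)).card := by
    unfold rowIn S0
    congr 1
    ext i
    simp [not_lt]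
  simp only [Finset.card_univ, Fintype.card_fin] at h2
  omega

lemma colIn_S0 [NeZero n] (htn : t < n) (a : Fin n) : colIn (S0 n t) a = n - t := by
  have h1 : (univ.filter (fun j : Fin n => ((j - a : Fin n) : ℕ) < t)).card = t := by
    have e : (univ.filter (fun j : Fin n => ((j - a : Fin n) : ℕ) < t)).card
        = (univ.filter (fun w : Fin n => (w : ℕ) < t)).card :=
      Finset.card_nbij' (i := fun j => j - a) (j := fun w => w + a)
        (hi := by simp [Set.MapsTo, Set.LeftInvOn, Set.RightInvOn, Set.EqOn]) (hj := by simp [Set.MapsTo, Set.LeftInvOn, Set.RightInvOn, Set.EqOn])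
        (left_inv := by simp [sub_add_cancel, Set.MapsTo, Set.LeftInvOn, Set.RightInvOn, Set.EqOn]) (right_inv := by simp [sub_add_cancel, Set.MapsTo, Set.LeftInvOn, Set.RightInvOn, Set.EqOn])
    rw [e, card_val_lt htn]
  have h2 := Finset.card_filter_add_card_filter_not
    (s := (univ : Finset (Fin n))) (p := fun j : Fin n => ((j - a : Fin n) : ℕ) < t)
  have h3 : colIn (S0 n t) a
      = (univ.filter (fun j : Fin n => ¬ ((j - a : Fin n) : ℕ) < t)).card := by
    unfold colIn S0
    congr 1
    ext j
    simp [not_lt]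
  simp only [Finset.card_univ, Fintype.card_fin] at h2
  omega

lemma card_S0 [NeZero n] (htn : t < n) : (S0 n t).card = n ^ 2 - t * n := by
  have h : (S0 n t).card = ∑ a : Fin n, ((S0 n t).filter (fun z => z.1 = a)).card :=
    Finset.card_eq_sum_card_fiberwise (fun x _ => mem_univ _)
  have h2 : ∀ a : Fin n, ((S0 n t).filter (fun z => z.1 = a)).card = n - t := by
    intro a; rw [colfilter_card, colIn_S0 htn]
  rw [Finset.sum_congr rfl (fun a _ => h2 a), Finset.sum_const, Finset.card_univ,
    Fintype.card_fin, smul_eq_mul] at h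
  have hmul : n * (n - t) + t * n = n ^ 2 := by
    obtain ⟨k, hk⟩ := Nat.le.dest htn.le
    have h5 : n - t = k := by omega
    rw [h5]
    subst hk
    ring
  omega

lemma weakRes_S0 [NeZero n] (hn3 : t + 3 ≤ n) :
    ∀ x y : Fin n × Fin n, x ≠ y → 2 * n - 2 * t ≤ delS (S0 n t) x y := by
  have htn : t < n := by omega
  rintro ⟨a, b⟩ ⟨c, d⟩ hxy
  by_cases hac : a = c
  · subst hac
    have hbd : b ≠ d := by simpa [Prod.ext_iff] using hxy
    rw [delB_eq _ _ _ _ hbd, rowIn_S0 htn, rowIn_S0 htn]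
    omega
  · by_cases hbd : b = d
    · subst hbd
      rw [delC_eq _ _ _ _ hac, colIn_S0 htn, colIn_S0 htn]
      omega
    · rw [delA_eq _ _ _ _ _ hac hbd]
      have h1 := bd1 (S0 n t) a d
      have h2 := bd2 (S0 n t) a b c
      have h3 := bd1 (S0 n t) c b
      have h4 := bd2 (S0 n t) c d a
      rw [colIn_S0 htn] at h1 h3
      rw [rowIn_S0 htn] at h2 h4
      omega
end constructionS

section lowerB
variable {n t : ℕ} {S : Finset (Fin n × Fin n)}

def rmiss (S : Finset (Fin n × Fin n)) (b : Fin n) : ℕ :=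
  (univ.filter (fun i : Fin n => (i, b) ∉ S)).card
def cmiss (S : Finset (Fin n × Fin n)) (a : Fin n) : ℕ :=
  (univ.filter (fun j : Fin n => (a, j) ∉ S)).card

lemma rowIn_add_rmiss (S : Finset (Fin n × Fin n)) (b : Fin n) :
    rowIn S b + rmiss S b = n := by
  have := Finset.card_filter_add_card_filter_not
    (s := (univ : Finset (Fin n))) (p := fun i => (i, b) ∈ S)
  simpa [rowIn, rmiss] using this

lemma colIn_add_cmiss (S : Finset (Fin n × Fin n)) (a : Fin n) :
    colIn S a + cmiss S a = n := by
  have := Finset.card_filter_add_card_filter_not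
    (s := (univ : Finset (Fin n))) (p := fun j => (a, j) ∈ S)
  simpa [colIn, cmiss] using this

lemma sum_rmiss (S : Finset (Fin n × Fin n)) :
    S.card + ∑ b : Fin n, rmiss S b = n ^ 2 := by
  have h : (Sᶜ).card = ∑ b : Fin n, ((Sᶜ).filter (fun z => z.2 = b)).card :=
    Finset.card_eq_sum_card_fiberwise (fun x _ => mem_univ _)
  have h2 : ∀ b : Fin n, ((Sᶜ).filter (fun z => z.2 = b)).card = rmiss S b := by
    intro b
    rw [rowfilter_card]
    unfold rowIn rmiss
    congr 1
    ext i
    simp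
  rw [Finset.sum_congr rfl (fun b _ => h2 b)] at h
  have h3 : S.card + Sᶜ.card = n * n := by
    rw [Finset.card_add_card_compl]
    simp [Fintype.card_prod]
  rw [h] at h3
  have h4 : n ^ 2 = n * n := sq n
  rw [h4]; exact h3

lemma sum_cmiss (S : Finset (Fin n × Fin n)) :
    S.card + ∑ a : Fin n, cmiss S a = n ^ 2 := by
  have h : (Sᶜ).card = ∑ a : Fin n, ((Sᶜ).filter (fun z => z.1 = a)).card :=
    Finset.card_eq_sum_card_fiberwise (fun x _ => mem_univ _)
  have h2 : ∀ a : Fin n, ((Sᶜ).filter (fun z => z.1 = a)).card = cmiss S a := by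
    intro a
    rw [colfilter_card]
    unfold colIn cmiss
    congr 1
    ext j
    simp
  rw [Finset.sum_congr rfl (fun a _ => h2 a)] at h
  have h3 : S.card + Sᶜ.card = n * n := by
    rw [Finset.card_add_card_compl]
    simp [Fintype.card_prod]
  rw [h] at h3
  have h4 : n ^ 2 = n * n := sq n
  rw [h4]; exact h3

lemma ind_le_one (P : Prop) [Decidable P] : (if P then (1:ℕ) else 0) ≤ 1 := by
  split_ifs <;> omega

lemma L1row_aux (hS : ∀ x y : Fin n × Fin n, x ≠ y → 2 * n - 2 * t ≤ delS S x y)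
    (htn : t ≤ n) (b d : Fin n) (hbd : b ≠ d) (hb : 0 < rmiss S b) :
    rmiss S b + rmiss S d ≤ 2 * t + 1 := by
  obtain ⟨a, ha⟩ := Finset.card_pos.mp hb
  simp only [mem_filter, mem_univ, true_and] at ha
  have hxy : ((a, b) : Fin n × Fin n) ≠ (a, d) := by simp [Prod.ext_iff, hbd]
  have h := hS (a, b) (a, d) hxy
  rw [delB_eq S a b d hbd, if_neg ha] at h
  have h2 := ind_le_one ((a, d) ∈ S)
  have hr1 := rowIn_add_rmiss S b
  have hr2 := rowIn_add_rmiss S d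
  omega

lemma L1row (hS : ∀ x y : Fin n × Fin n, x ≠ y → 2 * n - 2 * t ≤ delS S x y)
    (htn : t ≤ n) (b d : Fin n) (hbd : b ≠ d) :
    rmiss S b + rmiss S d ≤ 2 * t + 1 := by
  rcases Nat.eq_zero_or_pos (rmiss S b) with h0 | hpos
  · rcases Nat.eq_zero_or_pos (rmiss S d) with h0' | hpos'
    · omega
    · have := L1row_aux hS htn d b hbd.symm hpos'; omega
  · exact L1row_aux hS htn b d hbd hpos

lemma L1col_aux (hS : ∀ x y : Fin n × Fin n, x ≠ y → 2 * n - 2 * t ≤ delS S x y)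
    (htn : t ≤ n) (a c : Fin n) (hac : a ≠ c) (hb : 0 < cmiss S a) :
    cmiss S a + cmiss S c ≤ 2 * t + 1 := by
  obtain ⟨j, hj⟩ := Finset.card_pos.mp hb
  simp only [mem_filter, mem_univ, true_and] at hj
  have hxy : ((a, j) : Fin n × Fin n) ≠ (c, j) := by simp [Prod.ext_iff, hac]
  have h := hS (a, j) (c, j) hxy
  rw [delC_eq S a j c hac, if_neg hj] at h
  have h2 := ind_le_one ((c, j) ∈ S)
  have hr1 := colIn_add_cmiss S a
  have hr2 := colIn_add_cmiss S c
  omega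

lemma L1col (hS : ∀ x y : Fin n × Fin n, x ≠ y → 2 * n - 2 * t ≤ delS S x y)
    (htn : t ≤ n) (a c : Fin n) (hac : a ≠ c) :
    cmiss S a + cmiss S c ≤ 2 * t + 1 := by
  rcases Nat.eq_zero_or_pos (cmiss S a) with h0 | hpos
  · rcases Nat.eq_zero_or_pos (cmiss S c) with h0' | hpos'
    · omega
    · have := L1col_aux hS htn c a hac.symm hpos'; omega
  · exact L1col_aux hS htn a c hac hpos

lemma L2row (hS : ∀ x y : Fin n × Fin n, x ≠ y → 2 * n - 2 * t ≤ delS S x y)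
    (htn : t ≤ n) (b d : Fin n) (hbd : b ≠ d) (a : Fin n)
    (h1 : (a, b) ∉ S) (h2 : (a, d) ∉ S) :
    rmiss S b + rmiss S d ≤ 2 * t := by
  have hxy : ((a, b) : Fin n × Fin n) ≠ (a, d) := by simp [Prod.ext_iff, hbd]
  have h := hS (a, b) (a, d) hxy
  rw [delB_eq S a b d hbd, if_neg h1, if_neg h2] at h
  have hr1 := rowIn_add_rmiss S b
  have hr2 := rowIn_add_rmiss S d
  omega

lemma pair_sum_le {α : Type*} [DecidableEq α] {s : Finset α} {v : α → ℕ} {B : ℕ}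
    (hs : 2 ≤ s.card) (h : ∀ i ∈ s, ∀ j ∈ s, i ≠ j → v i + v j ≤ B) :
    ∑ i ∈ s, v i ≤ B + (s.card - 2) * (B / 2) := by
  obtain ⟨i0, hi0, hmax⟩ := s.exists_max_image v (by rw [← Finset.card_pos]; omega)
  have hne' : (s.erase i0).Nonempty := by
    rw [← Finset.card_pos, Finset.card_erase_of_mem hi0]; omega
  obtain ⟨i1, hi1, hmax1⟩ := (s.erase i0).exists_max_image v hne'
  have hi1s : i1 ∈ s := Finset.mem_of_mem_erase hi1
  have hne : i1 ≠ i0 := Finset.ne_of_mem_erase hi1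
  have hB : v i0 + v i1 ≤ B := h i0 hi0 i1 hi1s (Ne.symm hne)
  have hv1 : 2 * v i1 ≤ B := by have := hmax i1 hi1s; omega
  have hsum : ∑ i ∈ s, v i = v i0 + ∑ i ∈ s.erase i0, v i :=
    (Finset.add_sum_erase s v hi0).symm
  have h1 : ∑ i ∈ s.erase i0, v i ≤ (s.erase i0).card * v i1 := by
    have := Finset.sum_le_card_nsmul (s.erase i0) v (v i1) (fun x hx => hmax1 x hx)
    simpa using this
  rw [Finset.card_erase_of_mem hi0] at h1
  have h2 : (s.card - 1) * v i1 = (s.card - 2) * v i1 + v i1 := by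
    have hc : s.card - 1 = (s.card - 2) + 1 := by omega
    rw [hc, Nat.succ_mul]
  have h3 : (s.card - 2) * v i1 ≤ (s.card - 2) * (B / 2) :=
    Nat.mul_le_mul_left _ (by omega)
  omega

end lowerB

section mainlower
variable {n t : ℕ} {S : Finset (Fin n × Fin n)}

lemma lower_bound (hn : 4 ≤ n) (ht : 2 ≤ t) (hn3 : t + 3 ≤ n)
    (hS : ∀ x y : Fin n × Fin n, x ≠ y → 2 * n - 2 * t ≤ delS S x y) :
    n ^ 2 - t * n ≤ S.card := by
  by_contra hlt
  push_neg at hlt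
  have htn : t ≤ n := by omega
  have hrowT := sum_rmiss S
  have hcolT := sum_cmiss S
  have hnn : n ^ 2 = n * n := sq n
  have htle : t * n ≤ n * n := Nat.mul_le_mul_right n htn
  have hL1r := fun (b d : Fin n) (hbd : b ≠ d) => L1row hS htn b d hbd
  have hcardU : (univ : Finset (Fin n)).card = n := by simp
  have hps := pair_sum_le (s := (univ : Finset (Fin n))) (v := rmiss S) (B := 2*t+1)
    (by rw [hcardU]; omega) (fun i _ j _ hij => hL1r i j hij)
  rw [hcardU] at hps
  have hdiv : (2*t+1)/2 = t := by omega
  rw [hdiv] at hps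
  have hmul1 : (n-2)*t + 2*t = n*t := by rw [← Nat.add_mul]; congr 1; omega
  have hcm : t*n = n*t := Nat.mul_comm t n
  have hsigr : ∑ b : Fin n, rmiss S b = t*n + 1 := by omega
  have hsigc : ∑ a : Fin n, cmiss S a = t*n + 1 := by omega
  have hUne : (univ : Finset (Fin n)).Nonempty := by
    rw [← Finset.card_pos, hcardU]; omega
  obtain ⟨b0, hb0mem, hmaxb⟩ := (univ : Finset (Fin n)).exists_max_image (rmiss S) hUne
  have hothers : ∀ d : Fin n, d ≠ b0 → rmiss S d ≤ t := by
    intro d hd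
    have h1 := hL1r d b0 hd
    have h2 := hmaxb d (mem_univ d)
    omega
  have herase1 : ∑ b : Fin n, rmiss S b = rmiss S b0 + ∑ e ∈ univ.erase b0, rmiss S e :=
    (Finset.add_sum_erase _ _ (mem_univ b0)).symm
  have hrest_le : ∑ e ∈ univ.erase b0, rmiss S e ≤ (n-1)*t := by
    have h := Finset.sum_le_card_nsmul (univ.erase b0) (rmiss S) t
      (fun x hx => hothers x (Finset.ne_of_mem_erase hx))
    rw [Finset.card_erase_of_mem (mem_univ b0), hcardU] at h
    simpa using h
  have hmul2 : (n-1)*t + t = n*t := by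
    obtain ⟨n1, hn1⟩ : ∃ n1, n = n1 + 1 := ⟨n-1, by omega⟩
    subst hn1
    simp only [Nat.add_sub_cancel]
    ring
  have hb0ge : t + 1 ≤ rmiss S b0 := by omega
  have hpec : ∀ d : Fin n, d ≠ b0 → rmiss S b0 + rmiss S d = 2*t+1 := by
    intro d hd
    have hdm : d ∈ univ.erase b0 := Finset.mem_erase_of_ne_of_mem hd (mem_univ d)
    have herase2 : ∑ e ∈ univ.erase b0, rmiss S e
        = rmiss S d + ∑ e ∈ (univ.erase b0).erase d, rmiss S e :=
      (Finset.add_sum_erase _ _ hdm).symm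
    have hrest2 : ∑ e ∈ (univ.erase b0).erase d, rmiss S e ≤ (n-2)*t := by
      have h := Finset.sum_le_card_nsmul ((univ.erase b0).erase d) (rmiss S) t
        (fun x hx => hothers x (Finset.ne_of_mem_erase (Finset.mem_of_mem_erase hx)))
      rw [Finset.card_erase_of_mem hdm, Finset.card_erase_of_mem (mem_univ b0), hcardU] at h
      have hc : n - 1 - 1 = n - 2 := by omega
      rw [hc] at h
      simpa using h
    have hl1 := hL1r b0 d (Ne.symm hd)
    omega
  have hmul3 : (n-1)*(t-1) + n + t = n*t + 1 := by
    obtain ⟨n1, rfl⟩ : ∃ n1, n = n1 + 1 := ⟨n-1, by omega⟩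
    obtain ⟨t1, rfl⟩ : ∃ t1, t = t1 + 1 := ⟨t-1, by omega⟩
    simp only [Nat.add_sub_cancel]
    ring
  obtain ⟨d0, hd0⟩ : ∃ d0 : Fin n, d0 ≠ b0 :=
    Fintype.exists_ne_of_one_lt_card (by simp; omega) b0
  have hb0le : rmiss S b0 ≤ t + 1 := by
    by_contra hgt
    push_neg at hgt
    have hall : ∀ d : Fin n, d ≠ b0 → rmiss S d ≤ t - 1 := by
      intro d hd; have := hpec d hd; omega
    have hrle : ∑ e ∈ univ.erase b0, rmiss S e ≤ (n-1)*(t-1) := by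
      have h := Finset.sum_le_card_nsmul (univ.erase b0) (rmiss S) (t-1)
        (fun x hx => hall x (Finset.ne_of_mem_erase hx))
      rw [Finset.card_erase_of_mem (mem_univ b0), hcardU] at h
      simpa using h
    have := hpec d0 hd0
    omega
  have hb0 : rmiss S b0 = t + 1 := by omega
  have hspec : ∀ a : Fin n, (a, b0) ∉ S → cmiss S a = 1 := by
    intro a ha
    have hset : univ.filter (fun j : Fin n => (a, j) ∉ S) = {b0} := by
      ext j
      simp only [mem_filter, mem_univ, true_and, mem_singleton]
      constructor
      · intro hj
        by_contra hne
        have h2t := L2row hS htn b0 j (fun he => hne he.symm) a ha hj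
        have := hpec j hne
        omega
      · rintro rfl; exact ha
    unfold cmiss
    rw [hset, card_singleton]
  have hsplit := Finset.sum_filter_add_sum_filter_not (univ : Finset (Fin n))
    (fun a => (a, b0) ∉ S) (cmiss S)
  have hfcard : (univ.filter (fun a : Fin n => (a, b0) ∉ S)).card = t + 1 := hb0
  have hsp : ∑ a ∈ univ.filter (fun a : Fin n => (a, b0) ∉ S), cmiss S a = t + 1 := by
    rw [Finset.sum_congr rfl (fun a ha => hspec a (by simpa using (Finset.mem_filter.mp ha).2))]
    rw [Finset.sum_const, smul_eq_mul, mul_one, hfcard]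
  have hA1 := Finset.card_filter_add_card_filter_not
    (s := (univ : Finset (Fin n))) (p := fun a : Fin n => (a, b0) ∉ S)
  rw [hcardU] at hA1
  have hAcard : (univ.filter (fun a : Fin n => ¬ (a, b0) ∉ S)).card = n - (t+1) := by
    omega
  have hA2 : 2 ≤ (univ.filter (fun a : Fin n => ¬ (a, b0) ∉ S)).card := by omega
  have hpsA := pair_sum_le (s := univ.filter (fun a : Fin n => ¬ (a, b0) ∉ S))
    (v := cmiss S) (B := 2*t+1) hA2 (fun i _ j _ hij => L1col hS htn i j hij)
  rw [hAcard, hdiv] at hpsA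
  have hmul4 : (n - (t+1) - 2)*t + (t*t + 3*t) = n*t := by
    have h5 : (t*t + 3*t) = (t+3)*t := by ring
    rw [h5, ← Nat.add_mul]
    congr 1; omega
  have h4t : 4 ≤ t*t := Nat.mul_le_mul ht ht
  omega

end mainlower

theorem stmt_17 (n t : ℕ) (hn : 4 ≤ n) (ht : 2 ≤ t) (ht' : t ≤ n - 3) :
    wdim n (2 * n - 2 * t) = n ^ 2 - t * n := by
  have htn3 : t + 3 ≤ n := by omega
  haveI : NeZero n := ⟨by omega⟩
  have htn : t < n := by omega
  have hmem : n ^ 2 - t * n ∈ {m | ∃ S : Finset (Fin n × Fin n), weakRes (2*n - 2*t) S ∧ S.card = m} :=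
    ⟨S0 n t, fun x y hxy => weakRes_S0 htn3 x y hxy, card_S0 htn⟩
  apply le_antisymm
  · exact Nat.sInf_le hmem
  · apply le_csInf ⟨_, hmem⟩
    rintro m ⟨S, hS, rfl⟩
    exact lower_bound hn ht htn3 hS
end

section
/- For all integers n ≥ 6 and 1 ≤ t ≤ n−3, the weak (2n−2t−1)-metric dimension of K_n × K_n equals n² − tn − ⌊n/(t+1)⌋. -/
open Finset

theorem dd_row_pt {n : ℕ} (a b d : Fin n) (hbd : b ≠ d) (z : Fin n × Fin n) :
    ((dd (a,b) z : ℤ) - (dd (a,d) z : ℤ)).natAbs =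
      (if z = (a,b) ∨ z = (a,d) then 2 else 0) +
      (if z.1 ≠ a ∧ (z.2 = b ∨ z.2 = d) then 1 else 0) := by
  obtain ⟨u, v⟩ := z
  by_cases h1 : u = a <;> by_cases h2 : v = b <;> by_cases h3 : v = d <;>
    simp_all [dd, Prod.ext_iff] <;> omega

theorem filter_compl_card {α : Type*} [Fintype α] [DecidableEq α] (S : Finset α)
    (P : α → Prop) [DecidablePred P] :
    (S.filter P).card + (Sᶜ.filter P).card = (univ.filter P).card := by
  rw [← Finset.card_union_of_disjoint (Finset.disjoint_filter_filter disjoint_compl_right)]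
  congr 1
  rw [← Finset.filter_union, Finset.union_compl]

theorem delS_row {n : ℕ} (S : Finset (Fin n × Fin n)) (a b d : Fin n) (hbd : b ≠ d) :
    delS S (a,b) (a,d) +
      ((Sᶜ.filter fun p => p.2 = b).card + (Sᶜ.filter fun p => p.2 = d).card +
       (Sᶜ.filter fun p => p.1 = a ∧ (p.2 = b ∨ p.2 = d)).card) = 2*n + 2 := by
  classical
  have hsum : delS S (a,b) (a,d) =
      2 * (S.filter fun z => z = (a,b) ∨ z = (a,d)).card +
      (S.filter fun z => z.1 ≠ a ∧ (z.2 = b ∨ z.2 = d)).card := by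
    unfold delS
    rw [Finset.sum_congr rfl (fun z _ => dd_row_pt a b d hbd z), Finset.sum_add_distrib]
    congr 1 <;> simp [Finset.sum_ite, mul_comm]
  have hU2 : (univ.filter fun z : Fin n × Fin n => z = (a,b) ∨ z = (a,d)).card = 2 := by
    have h : (univ.filter fun z : Fin n × Fin n => z = (a,b) ∨ z = (a,d)) = {(a,b), (a,d)} := by
      ext z; simp
    rw [h, Finset.card_insert_of_notMem (by simp [Prod.ext_iff, hbd]), Finset.card_singleton]
  have hn1 : 1 ≤ n := a.pos
  have hU1 : (univ.filter fun z : Fin n × Fin n => z.1 ≠ a ∧ (z.2 = b ∨ z.2 = d)).card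
      = (n-1) * 2 := by
    have h : (univ.filter fun z : Fin n × Fin n => z.1 ≠ a ∧ (z.2 = b ∨ z.2 = d))
        = (univ.filter fun i : Fin n => i ≠ a) ×ˢ ({b, d} : Finset (Fin n)) := by
      ext z; simp [Finset.mem_product]
    rw [h, Finset.card_product]
    congr 1
    · rw [Finset.filter_ne', Finset.card_erase_of_mem (mem_univ _), Finset.card_univ,
        Fintype.card_fin]
    · rw [Finset.card_insert_of_notMem (by simp [hbd]), Finset.card_singleton]
  have hC2 := filter_compl_card S (fun z : Fin n × Fin n => z = (a,b) ∨ z = (a,d))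
  have hC1 := filter_compl_card S (fun z : Fin n × Fin n => z.1 ≠ a ∧ (z.2 = b ∨ z.2 = d))
  have hE : (Sᶜ.filter fun z : Fin n × Fin n => z = (a,b) ∨ z = (a,d))
      = (Sᶜ.filter fun p => p.1 = a ∧ (p.2 = b ∨ p.2 = d)) := by
    apply Finset.filter_congr; intro z _
    constructor
    · rintro (rfl | rfl) <;> simp
    · rintro ⟨h1, (h2 | h2)⟩
      · left; rw [Prod.ext_iff]; exact ⟨h1, h2⟩
      · right; rw [Prod.ext_iff]; exact ⟨h1, h2⟩
  have hsplit : (Sᶜ.filter fun p : Fin n × Fin n => p.2 = b).card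
      + (Sᶜ.filter fun p : Fin n × Fin n => p.2 = d).card
      = (Sᶜ.filter fun p => p.1 = a ∧ (p.2 = b ∨ p.2 = d)).card
      + (Sᶜ.filter fun p => p.1 ≠ a ∧ (p.2 = b ∨ p.2 = d)).card := by
    have h1 : (Sᶜ.filter fun p : Fin n × Fin n => p.2 = b ∨ p.2 = d).card
        = (Sᶜ.filter fun p : Fin n × Fin n => p.2 = b).card
        + (Sᶜ.filter fun p : Fin n × Fin n => p.2 = d).card := by
      rw [Finset.filter_or, Finset.card_union_of_disjoint]
      rw [Finset.disjoint_left]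
      intro p hp hq
      simp only [Finset.mem_filter] at hp hq
      exact hbd (hp.2 ▸ hq.2 ▸ rfl)
    have h3 := Finset.card_filter_add_card_filter_not
      (s := Sᶜ.filter (fun p : Fin n × Fin n => p.2 = b ∨ p.2 = d)) (p := fun p => p.1 = a)
    rw [Finset.filter_filter, Finset.filter_filter] at h3
    have e1 : (Sᶜ.filter fun p : Fin n × Fin n => (p.2 = b ∨ p.2 = d) ∧ p.1 = a)
        = Sᶜ.filter fun p => p.1 = a ∧ (p.2 = b ∨ p.2 = d) := by
      apply Finset.filter_congr; intro z _; tauto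
    have e2 : (Sᶜ.filter fun p : Fin n × Fin n => (p.2 = b ∨ p.2 = d) ∧ ¬ p.1 = a)
        = Sᶜ.filter fun p => p.1 ≠ a ∧ (p.2 = b ∨ p.2 = d) := by
      apply Finset.filter_congr; intro z _; tauto
    rw [e1, e2] at h3
    omega
  rw [hE] at hC2
  omega

theorem dd_col_pt {n : ℕ} (b a c : Fin n) (hac : a ≠ c) (z : Fin n × Fin n) :
    ((dd (a,b) z : ℤ) - (dd (c,b) z : ℤ)).natAbs =
      (if z = (a,b) ∨ z = (c,b) then 2 else 0) +
      (if z.2 ≠ b ∧ (z.1 = a ∨ z.1 = c) then 1 else 0) := by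
  obtain ⟨u, v⟩ := z
  by_cases h1 : v = b <;> by_cases h2 : u = a <;> by_cases h3 : u = c <;>
    simp_all [dd, Prod.ext_iff] <;> omega

theorem delS_col {n : ℕ} (S : Finset (Fin n × Fin n)) (b a c : Fin n) (hac : a ≠ c) :
    delS S (a,b) (c,b) +
      ((Sᶜ.filter fun p => p.1 = a).card + (Sᶜ.filter fun p => p.1 = c).card +
       (Sᶜ.filter fun p => p.2 = b ∧ (p.1 = a ∨ p.1 = c)).card) = 2*n + 2 := by
  classical
  have hsum : delS S (a,b) (c,b) =
      2 * (S.filter fun z => z = (a,b) ∨ z = (c,b)).card +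
      (S.filter fun z => z.2 ≠ b ∧ (z.1 = a ∨ z.1 = c)).card := by
    unfold delS
    rw [Finset.sum_congr rfl (fun z _ => dd_col_pt b a c hac z), Finset.sum_add_distrib]
    congr 1 <;> simp [Finset.sum_ite, mul_comm]
  have hU2 : (univ.filter fun z : Fin n × Fin n => z = (a,b) ∨ z = (c,b)).card = 2 := by
    have h : (univ.filter fun z : Fin n × Fin n => z = (a,b) ∨ z = (c,b)) = {(a,b), (c,b)} := by
      ext z; simp
    rw [h, Finset.card_insert_of_notMem (by simp [Prod.ext_iff, hac]), Finset.card_singleton]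
  have hn1 : 1 ≤ n := a.pos
  have hU1 : (univ.filter fun z : Fin n × Fin n => z.2 ≠ b ∧ (z.1 = a ∨ z.1 = c)).card
      = 2 * (n-1) := by
    have h : (univ.filter fun z : Fin n × Fin n => z.2 ≠ b ∧ (z.1 = a ∨ z.1 = c))
        = ({a, c} : Finset (Fin n)) ×ˢ (univ.filter fun j : Fin n => j ≠ b) := by
      ext z; simp [Finset.mem_product]; tauto
    rw [h, Finset.card_product]
    rw [Finset.card_insert_of_notMem (by simp [hac]), Finset.card_singleton]
    congr 1
    rw [Finset.filter_ne', Finset.card_erase_of_mem (mem_univ _), Finset.card_univ,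
      Fintype.card_fin]
  have hC2 := filter_compl_card S (fun z : Fin n × Fin n => z = (a,b) ∨ z = (c,b))
  have hC1 := filter_compl_card S (fun z : Fin n × Fin n => z.2 ≠ b ∧ (z.1 = a ∨ z.1 = c))
  have hE : (Sᶜ.filter fun z : Fin n × Fin n => z = (a,b) ∨ z = (c,b))
      = (Sᶜ.filter fun p => p.2 = b ∧ (p.1 = a ∨ p.1 = c)) := by
    apply Finset.filter_congr; intro z _
    constructor
    · rintro (rfl | rfl) <;> simp
    · rintro ⟨h1, (h2 | h2)⟩
      · left; rw [Prod.ext_iff]; exact ⟨h2, h1⟩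
      · right; rw [Prod.ext_iff]; exact ⟨h2, h1⟩
  have hsplit : (Sᶜ.filter fun p : Fin n × Fin n => p.1 = a).card
      + (Sᶜ.filter fun p : Fin n × Fin n => p.1 = c).card
      = (Sᶜ.filter fun p => p.2 = b ∧ (p.1 = a ∨ p.1 = c)).card
      + (Sᶜ.filter fun p => p.2 ≠ b ∧ (p.1 = a ∨ p.1 = c)).card := by
    have h1 : (Sᶜ.filter fun p : Fin n × Fin n => p.1 = a ∨ p.1 = c).card
        = (Sᶜ.filter fun p : Fin n × Fin n => p.1 = a).card
        + (Sᶜ.filter fun p : Fin n × Fin n => p.1 = c).card := by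
      rw [Finset.filter_or, Finset.card_union_of_disjoint]
      rw [Finset.disjoint_left]
      intro p hp hq
      simp only [Finset.mem_filter] at hp hq
      exact hac (hp.2 ▸ hq.2 ▸ rfl)
    have h3 := Finset.card_filter_add_card_filter_not
      (s := Sᶜ.filter (fun p : Fin n × Fin n => p.1 = a ∨ p.1 = c)) (p := fun p => p.2 = b)
    rw [Finset.filter_filter, Finset.filter_filter] at h3
    have e1 : (Sᶜ.filter fun p : Fin n × Fin n => (p.1 = a ∨ p.1 = c) ∧ p.2 = b)
        = Sᶜ.filter fun p => p.2 = b ∧ (p.1 = a ∨ p.1 = c) := by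
      apply Finset.filter_congr; intro z _; tauto
    have e2 : (Sᶜ.filter fun p : Fin n × Fin n => (p.1 = a ∨ p.1 = c) ∧ ¬ p.2 = b)
        = Sᶜ.filter fun p => p.2 ≠ b ∧ (p.1 = a ∨ p.1 = c) := by
      apply Finset.filter_congr; intro z _; tauto
    rw [e1, e2] at h3
    omega
  rw [hE] at hC2
  omega

theorem dd_diag_pt {n : ℕ} (a c b d : Fin n) (hac : a ≠ c) (hbd : b ≠ d) (z : Fin n × Fin n) :
    ((dd (a,b) z : ℤ) - (dd (c,d) z : ℤ)).natAbs =
      (if ((z.1 = a ∨ z.1 = c ∨ z.2 = b ∨ z.2 = d) ∧ z ≠ (a,d) ∧ z ≠ (c,b)) then 1 else 0) := by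
  obtain ⟨u, v⟩ := z
  by_cases h1 : u = a <;> by_cases h2 : u = c <;> by_cases h3 : v = b <;> by_cases h4 : v = d <;>
    simp_all [dd, Prod.ext_iff] <;> omega

theorem card_filter_pair {α : Type*} [DecidableEq α] (S : Finset α) (p p' : α) (h : p ≠ p') :
    (S.filter fun z => z = p ∨ z = p').card
      = (if p ∈ S then 1 else 0) + (if p' ∈ S then 1 else 0) := by
  rw [Finset.filter_or, Finset.card_union_of_disjoint, Finset.filter_eq', Finset.filter_eq']
  · split_ifs <;> simp
  · rw [Finset.disjoint_left]; intro x hx hy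
    simp only [Finset.mem_filter] at hx hy
    exact h (hx.2 ▸ hy.2 ▸ rfl)

theorem disj_filter {α : Type*} [DecidableEq α] {s : Finset α} {p q : α → Prop}
    [DecidablePred p] [DecidablePred q] (h : ∀ x, p x → q x → False) :
    Disjoint (s.filter p) (s.filter q) := by
  rw [Finset.disjoint_left]; intro a ha hb
  simp only [Finset.mem_filter] at ha hb
  exact h a ha.2 hb.2

theorem line_split_col {n : ℕ} (S : Finset (Fin n × Fin n)) (a c b : Fin n) (hac : a ≠ c) :
    (S.filter fun z => z.2 = b).card
      = (S.filter fun z => z.2 = b ∧ ¬(z.1 = a ∨ z.1 = c)).card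
        + ((if (a,b) ∈ S then 1 else 0) + (if (c,b) ∈ S then 1 else 0)) := by
  have h3 := Finset.card_filter_add_card_filter_not
    (s := S.filter (fun z : Fin n × Fin n => z.2 = b)) (p := fun z => z.1 = a ∨ z.1 = c)
  rw [Finset.filter_filter, Finset.filter_filter] at h3
  have e1 : (S.filter fun z : Fin n × Fin n => z.2 = b ∧ (z.1 = a ∨ z.1 = c))
      = S.filter fun z => z = (a,b) ∨ z = (c,b) := by
    apply Finset.filter_congr; intro z _
    simp only [Prod.ext_iff]; tauto
  rw [e1, card_filter_pair _ _ _ (by simp [Prod.ext_iff, hac])] at h3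
  omega

theorem line_split_row {n : ℕ} (S : Finset (Fin n × Fin n)) (a b d : Fin n) (hbd : b ≠ d) :
    (S.filter fun z => z.1 = a).card
      = (S.filter fun z => z.1 = a ∧ ¬(z.2 = b ∨ z.2 = d)).card
        + ((if (a,b) ∈ S then 1 else 0) + (if (a,d) ∈ S then 1 else 0)) := by
  have h3 := Finset.card_filter_add_card_filter_not
    (s := S.filter (fun z : Fin n × Fin n => z.1 = a)) (p := fun z => z.2 = b ∨ z.2 = d)
  rw [Finset.filter_filter, Finset.filter_filter] at h3
  have e1 : (S.filter fun z : Fin n × Fin n => z.1 = a ∧ (z.2 = b ∨ z.2 = d))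
      = S.filter fun z => z = (a,b) ∨ z = (a,d) := by
    apply Finset.filter_congr; intro z _
    simp only [Prod.ext_iff]; tauto
  rw [e1, card_filter_pair _ _ _ (by simp [Prod.ext_iff, hbd])] at h3
  omega

theorem card_col_univ {n : ℕ} (b : Fin n) :
    (univ.filter fun z : Fin n × Fin n => z.2 = b).card = n := by
  have h : (univ.filter fun z : Fin n × Fin n => z.2 = b) = univ ×ˢ {b} := by
    ext ⟨u,v⟩; simp [Finset.mem_product, eq_comm]
  rw [h, Finset.card_product, Finset.card_univ, Fintype.card_fin, Finset.card_singleton, mul_one]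

theorem card_row_univ {n : ℕ} (a : Fin n) :
    (univ.filter fun z : Fin n × Fin n => z.1 = a).card = n := by
  have h : (univ.filter fun z : Fin n × Fin n => z.1 = a) = {a} ×ˢ univ := by
    ext ⟨u,v⟩; simp [Finset.mem_product, eq_comm]
  rw [h, Finset.card_product, Finset.card_univ, Fintype.card_fin, Finset.card_singleton, one_mul]

theorem delS_diag_ge {n : ℕ} (S : Finset (Fin n × Fin n)) (a c b d : Fin n)
    (hac : a ≠ c) (hbd : b ≠ d) :
    4*n ≤ delS S (a,b) (c,d) +
      ((Sᶜ.filter fun p => p.2 = b).card + (Sᶜ.filter fun p => p.2 = d).card +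
       (Sᶜ.filter fun p => p.1 = a).card + (Sᶜ.filter fun p => p.1 = c).card) +
      ((if (a,b) ∈ S then 1 else 0) + (if (c,d) ∈ S then 1 else 0) +
       2 * (if (a,d) ∈ S then 1 else 0) + 2 * (if (c,b) ∈ S then 1 else 0)) := by
  classical
  have hd : delS S (a,b) (c,d) = (S.filter fun z : Fin n × Fin n =>
      (z.1 = a ∨ z.1 = c ∨ z.2 = b ∨ z.2 = d) ∧ z ≠ (a,d) ∧ z ≠ (c,b)).card := by
    unfold delS
    rw [Finset.sum_congr rfl (fun z _ => dd_diag_pt a c b d hac hbd z)]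
    simp [Finset.sum_ite]
  set P1 := S.filter fun z : Fin n × Fin n => z.2 = b ∧ ¬(z.1 = a ∨ z.1 = c) with hP1
  set P2 := S.filter fun z : Fin n × Fin n => z.2 = d ∧ ¬(z.1 = a ∨ z.1 = c) with hP2
  set P3 := S.filter fun z : Fin n × Fin n => z.1 = a ∧ ¬(z.2 = b ∨ z.2 = d) with hP3
  set P4 := S.filter fun z : Fin n × Fin n => z.1 = c ∧ ¬(z.2 = b ∨ z.2 = d) with hP4
  set P5 := S.filter fun z : Fin n × Fin n => z = (a,b) ∨ z = (c,d) with hP5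
  have hsub : P1 ∪ P2 ∪ P3 ∪ P4 ∪ P5 ⊆ S.filter fun z : Fin n × Fin n =>
      (z.1 = a ∨ z.1 = c ∨ z.2 = b ∨ z.2 = d) ∧ z ≠ (a,d) ∧ z ≠ (c,b) := by
    intro z hz
    simp only [hP1, hP2, hP3, hP4, hP5, Finset.mem_union, Finset.mem_filter] at hz
    obtain ⟨u, v⟩ := z
    simp only [Finset.mem_filter, ne_eq, Prod.mk.injEq, not_and]
    rcases hz with ((((⟨h1,h2,h3⟩|⟨h1,h2,h3⟩)|⟨h1,h2,h3⟩)|⟨h1,h2,h3⟩)|⟨h1,h2⟩)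
    · exact ⟨h1, by tauto, by tauto, by tauto⟩
    · exact ⟨h1, by tauto, by tauto, by tauto⟩
    · exact ⟨h1, by tauto, by tauto, by tauto⟩
    · exact ⟨h1, by tauto, by tauto, by tauto⟩
    · rcases h2 with h2 | h2 <;> rw [Prod.mk.injEq] at h2 <;> obtain ⟨rfl, rfl⟩ := h2 <;>
        refine ⟨h1, by tauto, ?_, ?_⟩ <;> intro hx hy <;> simp_all
  have hc1 : (P1 ∪ P2 ∪ P3 ∪ P4 ∪ P5).card = P1.card + P2.card + P3.card + P4.card + P5.card := by
    have d12 : Disjoint P1 P2 :=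
      disj_filter (by rintro ⟨u,v⟩ ⟨h1,h2⟩ ⟨h3,h4⟩; exact hbd (h1 ▸ h3 ▸ rfl))
    have d13 : Disjoint P1 P3 :=
      disj_filter (by rintro ⟨u,v⟩ ⟨h1,h2⟩ ⟨h3,h4⟩; exact h2 (Or.inl h3))
    have d14 : Disjoint P1 P4 :=
      disj_filter (by rintro ⟨u,v⟩ ⟨h1,h2⟩ ⟨h3,h4⟩; exact h2 (Or.inr h3))
    have d23 : Disjoint P2 P3 :=
      disj_filter (by rintro ⟨u,v⟩ ⟨h1,h2⟩ ⟨h3,h4⟩; exact h2 (Or.inl h3))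
    have d24 : Disjoint P2 P4 :=
      disj_filter (by rintro ⟨u,v⟩ ⟨h1,h2⟩ ⟨h3,h4⟩; exact h2 (Or.inr h3))
    have d34 : Disjoint P3 P4 :=
      disj_filter (by rintro ⟨u,v⟩ ⟨h1,h2⟩ ⟨h3,h4⟩; exact hac (h1 ▸ h3 ▸ rfl))
    have d15 : Disjoint P1 P5 := disj_filter (by
      rintro ⟨u,v⟩ ⟨h1,h2⟩ (h3 | h3) <;> rw [Prod.mk.injEq] at h3 <;> obtain ⟨rfl, rfl⟩ := h3
        <;> simp_all
      )
    have d25 : Disjoint P2 P5 := disj_filter (by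
      rintro ⟨u,v⟩ ⟨h1,h2⟩ (h3 | h3) <;> rw [Prod.mk.injEq] at h3 <;> obtain ⟨rfl, rfl⟩ := h3
        <;> simp_all
      )
    have d35 : Disjoint P3 P5 := disj_filter (by
      rintro ⟨u,v⟩ ⟨h1,h2⟩ (h3 | h3) <;> rw [Prod.mk.injEq] at h3 <;> obtain ⟨rfl, rfl⟩ := h3
        <;> simp_all
      )
    have d45 : Disjoint P4 P5 := disj_filter (by
      rintro ⟨u,v⟩ ⟨h1,h2⟩ (h3 | h3) <;> rw [Prod.mk.injEq] at h3 <;> obtain ⟨rfl, rfl⟩ := h3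
        <;> simp_all
      )
    rw [Finset.card_union_of_disjoint, Finset.card_union_of_disjoint,
      Finset.card_union_of_disjoint, Finset.card_union_of_disjoint]
    · exact d12
    · rw [Finset.disjoint_union_left]; exact ⟨d13, d23⟩
    · rw [Finset.disjoint_union_left, Finset.disjoint_union_left]; exact ⟨⟨d14, d24⟩, d34⟩
    · rw [Finset.disjoint_union_left, Finset.disjoint_union_left, Finset.disjoint_union_left]
      exact ⟨⟨⟨d15, d25⟩, d35⟩, d45⟩
  have hge : P1.card + P2.card + P3.card + P4.card + P5.card ≤ delS S (a,b) (c,d) := by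
    rw [hd, ← hc1]; exact Finset.card_le_card hsub
  have eb := line_split_col S a c b hac
  have ed := line_split_col S a c d hac
  have ea := line_split_row S a b d hbd
  have ec := line_split_row S c b d hbd
  have cb' := filter_compl_card S (fun z : Fin n × Fin n => z.2 = b)
  have cd' := filter_compl_card S (fun z : Fin n × Fin n => z.2 = d)
  have ca' := filter_compl_card S (fun z : Fin n × Fin n => z.1 = a)
  have cc' := filter_compl_card S (fun z : Fin n × Fin n => z.1 = c)
  rw [card_col_univ] at cb' cd'
  rw [card_row_univ] at ca' cc'
  have e5 : P5.card = (if (a,b) ∈ S then 1 else 0) + (if (c,d) ∈ S then 1 else 0) :=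
    card_filter_pair _ _ _ (by simp [Prod.ext_iff]; tauto)
  rw [← hP1] at eb; rw [← hP2] at ed; rw [← hP3] at ea; rw [← hP4] at ec
  omega

theorem struct (n t : ℕ) (hn : 2 ≤ n) (ht : 1 ≤ t) (c : Fin n → ℕ) (b0 : Fin n)
    (hM : t+2 ≤ c b0) (hcb : c b0 ≤ n)
    (hother : ∀ d, d ≠ b0 → (c d + c b0 ≤ 2*t+2 ∨ c d = 0))
    (hbig : t*n + 2 ≤ ∑ b, c b) :
    c b0 = t+2 ∧ ∀ d, d ≠ b0 → c d = t := by
  have hsplit : ∑ b ∈ univ.erase b0, c b + c b0 = ∑ b, c b :=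
    Finset.sum_erase_add _ _ (mem_univ _)
  have hle_t : ∀ d, d ≠ b0 → c d ≤ 2*t+2 - c b0 := by
    intro d hd
    rcases hother d hd with h | h <;> omega
  have hcard_erase : (univ.erase b0).card = n - 1 := by
    rw [Finset.card_erase_of_mem (mem_univ _), Finset.card_univ, Fintype.card_fin]
  -- c b0 = t + 2
  have hM2 : c b0 = t + 2 := by
    by_contra hne
    have hM3 : t + 3 ≤ c b0 := by omega
    have hsum1 : ∑ b ∈ univ.erase b0, c b ≤ (n-1) * (t-1) := by
      calc ∑ b ∈ univ.erase b0, c b ≤ (univ.erase b0).card * (t-1) := by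
            apply Finset.sum_le_card_nsmul
            intro d hd
            have := hle_t d (Finset.ne_of_mem_erase hd)
            omega
        _ = (n-1) * (t-1) := by rw [hcard_erase]
    have hprod : (n-1) * (t-1) + n + t = t*n + 1 := by
      obtain ⟨n', rfl⟩ := Nat.exists_eq_add_of_le hn
      obtain ⟨t', rfl⟩ := Nat.exists_eq_add_of_le ht
      have e1 : 2 + n' - 1 = n' + 1 := by omega
      have e2 : 1 + t' - 1 = t' := by omega
      rw [e1, e2]; ring
    omega
  refine ⟨hM2, ?_⟩
  intro d1 hd1
  by_contra hne
  have hd1t : c d1 ≤ t - 1 := by have := hle_t d1 hd1; omega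
  have hsplit2 : ∑ b ∈ (univ.erase b0).erase d1, c b + c d1 = ∑ b ∈ univ.erase b0, c b :=
    Finset.sum_erase_add _ _ (Finset.mem_erase.2 ⟨hd1, mem_univ _⟩)
  have hsum2 : ∑ b ∈ (univ.erase b0).erase d1, c b ≤ (n-2) * t := by
    calc ∑ b ∈ (univ.erase b0).erase d1, c b ≤ ((univ.erase b0).erase d1).card * t := by
          apply Finset.sum_le_card_nsmul
          intro d hd
          have := hle_t d (Finset.ne_of_mem_erase (Finset.mem_of_mem_erase hd))
          omega
      _ = (n-2) * t := by
          rw [Finset.card_erase_of_mem (Finset.mem_erase.2 ⟨hd1, mem_univ _⟩), hcard_erase]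
          congr 1
  have h2t : 2*t ≤ t*n := by
    calc 2*t = t*2 := by ring
      _ ≤ t*n := Nat.mul_le_mul_left t hn
  have hprod : (n-2) * t + 2*t = t*n := by
    rw [Nat.sub_mul, mul_comm n t]; omega
  omega

theorem col_card_eq {n : ℕ} (T : Finset (Fin n × Fin n)) (b : Fin n) :
    (univ.filter fun i : Fin n => (i, b) ∈ T).card = (T.filter fun p => p.2 = b).card := by
  apply Finset.card_bij (fun i _ => (i, b))
  · intro i hi
    simp only [Finset.mem_filter] at hi
    simp [hi.2]
  · intro i _ j _ h; exact (Prod.mk.injEq _ _ _ _).mp h |>.1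
  · rintro ⟨p1, p2⟩ hp
    simp only [Finset.mem_filter] at hp
    obtain ⟨hp1, rfl⟩ : (p1, p2) ∈ T ∧ p2 = b := hp
    exact ⟨p1, by simp [hp1]⟩

theorem row_card_eq {n : ℕ} (T : Finset (Fin n × Fin n)) (a : Fin n) :
    (univ.filter fun j : Fin n => (a, j) ∈ T).card = (T.filter fun p => p.1 = a).card := by
  apply Finset.card_bij (fun j _ => (a, j))
  · intro j hj
    simp only [Finset.mem_filter] at hj
    simp [hj.2]
  · intro i _ j _ h; exact (Prod.mk.injEq _ _ _ _).mp h |>.2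
  · rintro ⟨p1, p2⟩ hp
    simp only [Finset.mem_filter] at hp
    obtain ⟨hp1, rfl⟩ : (p1, p2) ∈ T ∧ p1 = a := hp
    exact ⟨p2, by simp [hp1]⟩

theorem EXT {n t : ℕ} (hn : 6 ≤ n) (ht : 1 ≤ t) (ht3 : t + 3 ≤ n)
    (T : Finset (Fin n × Fin n))
    (HA : ∀ a b d : Fin n, b ≠ d →
        (T.filter fun p => p.2 = b).card + (T.filter fun p => p.2 = d).card +
        (T.filter fun p => p.1 = a ∧ (p.2 = b ∨ p.2 = d)).card ≤ 2*t+3)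
    (HB : ∀ b a c : Fin n, a ≠ c →
        (T.filter fun p => p.1 = a).card + (T.filter fun p => p.1 = c).card +
        (T.filter fun p => p.2 = b ∧ (p.1 = a ∨ p.1 = c)).card ≤ 2*t+3) :
    T.card ≤ t*n + n/(t+1) := by
  classical
  have htp : 0 < t + 1 := by omega
  have hfibc : T.card = ∑ b : Fin n, (T.filter fun p => p.2 = b).card :=
    Finset.card_eq_sum_card_fiberwise (fun x _ => mem_univ _)
  have hfibr : T.card = ∑ a : Fin n, (T.filter fun p => p.1 = a).card :=
    Finset.card_eq_sum_card_fiberwise (fun x _ => mem_univ _)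
  have hcoln : ∀ b, (T.filter fun p => p.2 = b).card ≤ n := by
    intro b
    have h1 : (T.filter fun p => p.2 = b) ⊆ univ.filter fun p => p.2 = b :=
      Finset.filter_subset_filter _ (Finset.subset_univ _)
    have h2 : (univ.filter fun z : Fin n × Fin n => z.2 = b) = univ ×ˢ {b} := by
      ext ⟨u,v⟩; simp [Finset.mem_product, eq_comm]
    have := Finset.card_le_card h1
    rwa [h2, Finset.card_product, Finset.card_univ, Fintype.card_fin, Finset.card_singleton,
      mul_one] at this
  have hrown : ∀ a, (T.filter fun p => p.1 = a).card ≤ n := by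
    intro a
    have h1 : (T.filter fun p => p.1 = a) ⊆ univ.filter fun p => p.1 = a :=
      Finset.filter_subset_filter _ (Finset.subset_univ _)
    have h2 : (univ.filter fun z : Fin n × Fin n => z.1 = a) = {a} ×ˢ univ := by
      ext ⟨u,v⟩; simp [Finset.mem_product, eq_comm]
    have := Finset.card_le_card h1
    rwa [h2, Finset.card_product, Finset.card_univ, Fintype.card_fin, Finset.card_singleton,
      one_mul] at this
  -- e-term bounds
  have epair : ∀ (i b d : Fin n), b ≠ d → (i,b) ∈ T → (i,d) ∈ T →
      2 ≤ (T.filter fun p => p.1 = i ∧ (p.2 = b ∨ p.2 = d)).card := by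
    intro i b d hbd h1 h2
    have hsub : ({(i,b), (i,d)} : Finset (Fin n × Fin n)) ⊆
        T.filter fun p => p.1 = i ∧ (p.2 = b ∨ p.2 = d) := by
      intro z hz
      simp only [Finset.mem_insert, Finset.mem_singleton] at hz
      rcases hz with rfl | rfl <;> simp [h1, h2]
    have hc : ({(i,b), (i,d)} : Finset (Fin n × Fin n)).card = 2 := by
      rw [Finset.card_insert_of_notMem (by simp [hbd]), Finset.card_singleton]
    calc 2 = ({(i,b), (i,d)} : Finset (Fin n × Fin n)).card := hc.symm
      _ ≤ _ := Finset.card_le_card hsub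
  have eone : ∀ (i b d : Fin n), (i,b) ∈ T →
      1 ≤ (T.filter fun p => p.1 = i ∧ (p.2 = b ∨ p.2 = d)).card := by
    intro i b d h1
    apply Finset.card_pos.2
    exact ⟨(i,b), by simp [h1]⟩
  have eone' : ∀ (i b a c : Fin n), (a,i) ∈ T →
      1 ≤ (T.filter fun p => p.2 = i ∧ (p.1 = a ∨ p.1 = c)).card := by
    intro i b a c h1
    apply Finset.card_pos.2
    exact ⟨(a,i), by simp [h1]⟩
  have epair' : ∀ (i a c : Fin n), a ≠ c → (a,i) ∈ T → (c,i) ∈ T →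
      2 ≤ (T.filter fun p => p.2 = i ∧ (p.1 = a ∨ p.1 = c)).card := by
    intro i a c hac h1 h2
    have hsub : ({(a,i), (c,i)} : Finset (Fin n × Fin n)) ⊆
        T.filter fun p => p.2 = i ∧ (p.1 = a ∨ p.1 = c) := by
      intro z hz
      simp only [Finset.mem_insert, Finset.mem_singleton] at hz
      rcases hz with rfl | rfl <;> simp [h1, h2]
    have hc : ({(a,i), (c,i)} : Finset (Fin n × Fin n)).card = 2 := by
      rw [Finset.card_insert_of_notMem (by simp [hac]), Finset.card_singleton]
    calc 2 = ({(a,i), (c,i)} : Finset (Fin n × Fin n)).card := hc.symm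
      _ ≤ _ := Finset.card_le_card hsub
  by_cases hc1 : ∀ b, (T.filter fun p => p.2 = b).card ≤ t+1
  · -- Case 1: all columns small
    set H := univ.filter (fun b : Fin n => (T.filter fun p => p.2 = b).card = t+1) with hH
    have hdisj : ∀ b ∈ H, ∀ d ∈ H, b ≠ d →
        Disjoint (univ.filter fun i : Fin n => (i, b) ∈ T)
                 (univ.filter fun i : Fin n => (i, d) ∈ T) := by
      intro b hb d hd hbd
      rw [Finset.disjoint_left]
      intro i hib hid
      simp only [Finset.mem_filter] at hib hid
      have h2 := epair i b d hbd hib.2 hid.2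
      have h3 := HA i b d hbd
      simp only [hH, Finset.mem_filter] at hb hd
      omega
    have hbU : (H.biUnion (fun b => univ.filter fun i : Fin n => (i, b) ∈ T)).card
        = ∑ b ∈ H, (univ.filter fun i : Fin n => (i, b) ∈ T).card :=
      Finset.card_biUnion hdisj
    have hbUle : (H.biUnion (fun b => univ.filter fun i : Fin n => (i, b) ∈ T)).card ≤ n := by
      calc _ ≤ (univ : Finset (Fin n)).card := Finset.card_le_card (Finset.subset_univ _)
        _ = n := by rw [Finset.card_univ, Fintype.card_fin]
    have hsum : ∑ b ∈ H, (univ.filter fun i : Fin n => (i, b) ∈ T).card = H.card * (t+1) := by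
      rw [Finset.sum_congr rfl (fun b hb => ?_), Finset.sum_const, smul_eq_mul]
      rw [col_card_eq]
      simp only [hH, Finset.mem_filter] at hb
      exact hb.2
    have hHle : H.card ≤ n / (t+1) := by
      rw [Nat.le_div_iff_mul_le htp]
      omega
    have hTle : T.card ≤ n * t + H.card := by
      rw [hfibc]
      calc ∑ b : Fin n, (T.filter fun p => p.2 = b).card
          ≤ ∑ b : Fin n, (t + if b ∈ H then 1 else 0) := by
            apply Finset.sum_le_sum
            intro b _
            by_cases hb : b ∈ H
            · simp only [hb, if_true]
              simp only [hH, Finset.mem_filter] at hb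
              omega
            · simp only [hb, if_false]
              have : (T.filter fun p => p.2 = b).card ≠ t+1 := by
                simp only [hH, Finset.mem_filter] at hb
                tauto
              have := hc1 b
              omega
        _ = n * t + H.card := by
            rw [Finset.sum_add_distrib, Finset.sum_const, Finset.card_univ, Fintype.card_fin,
              smul_eq_mul, Finset.sum_ite_mem, Finset.univ_inter, Finset.sum_const,
              smul_eq_mul, mul_one]
    have : t*n = n*t := mul_comm t n
    omega
  · by_cases hr1 : ∀ a, (T.filter fun p => p.1 = a).card ≤ t+1
    · -- Case 1': all rows small (mirror)
      set H := univ.filter (fun a : Fin n => (T.filter fun p => p.1 = a).card = t+1) with hH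
      have hdisj : ∀ a ∈ H, ∀ c ∈ H, a ≠ c →
          Disjoint (univ.filter fun j : Fin n => (a, j) ∈ T)
                   (univ.filter fun j : Fin n => (c, j) ∈ T) := by
        intro a ha c hc hac
        rw [Finset.disjoint_left]
        intro j hja hjc
        simp only [Finset.mem_filter] at hja hjc
        have h2 := epair' j a c hac hja.2 hjc.2
        have h3 := HB j a c hac
        simp only [hH, Finset.mem_filter] at ha hc
        omega
      have hbU : (H.biUnion (fun a => univ.filter fun j : Fin n => (a, j) ∈ T)).card
          = ∑ a ∈ H, (univ.filter fun j : Fin n => (a, j) ∈ T).card :=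
        Finset.card_biUnion hdisj
      have hbUle : (H.biUnion (fun a => univ.filter fun j : Fin n => (a, j) ∈ T)).card ≤ n := by
        calc _ ≤ (univ : Finset (Fin n)).card := Finset.card_le_card (Finset.subset_univ _)
          _ = n := by rw [Finset.card_univ, Fintype.card_fin]
      have hsum : ∑ a ∈ H, (univ.filter fun j : Fin n => (a, j) ∈ T).card = H.card * (t+1) := by
        rw [Finset.sum_congr rfl (fun a ha => ?_), Finset.sum_const, smul_eq_mul]
        rw [row_card_eq]
        simp only [hH, Finset.mem_filter] at ha
        exact ha.2
      have hHle : H.card ≤ n / (t+1) := by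
        rw [Nat.le_div_iff_mul_le htp]
        omega
      have hTle : T.card ≤ n * t + H.card := by
        rw [hfibr]
        calc ∑ a : Fin n, (T.filter fun p => p.1 = a).card
            ≤ ∑ a : Fin n, (t + if a ∈ H then 1 else 0) := by
              apply Finset.sum_le_sum
              intro a _
              by_cases ha : a ∈ H
              · simp only [ha, if_true]
                simp only [hH, Finset.mem_filter] at ha
                omega
              · simp only [ha, if_false]
                have : (T.filter fun p => p.1 = a).card ≠ t+1 := by
                  simp only [hH, Finset.mem_filter] at ha
                  tauto
                have := hr1 a
                omega
          _ = n * t + H.card := by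
              rw [Finset.sum_add_distrib, Finset.sum_const, Finset.card_univ, Fintype.card_fin,
                smul_eq_mul, Finset.sum_ite_mem, Finset.univ_inter, Finset.sum_const,
                smul_eq_mul, mul_one]
      have : t*n = n*t := mul_comm t n
      omega
    · -- Case 2: a big column and a big row
      push_neg at hc1 hr1
      obtain ⟨b0, hb0⟩ := hc1
      obtain ⟨a0, ha0⟩ := hr1
      have hb0' : t + 2 ≤ (T.filter fun p => p.2 = b0).card := hb0
      have ha0' : t + 2 ≤ (T.filter fun p => p.1 = a0).card := ha0
      have hotherc : ∀ d, d ≠ b0 →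
          ((T.filter fun p => p.2 = d).card + (T.filter fun p => p.2 = b0).card ≤ 2*t+2 ∨
           (T.filter fun p => p.2 = d).card = 0) := by
        intro d hd
        by_cases hz : (T.filter fun p => p.2 = d).card = 0
        · right; exact hz
        · left
          obtain ⟨p, hp⟩ := Finset.card_pos.1 (Nat.pos_of_ne_zero hz)
          simp only [Finset.mem_filter] at hp
          have h1 := eone p.1 d b0 (by rw [← hp.2]; exact hp.1)
          have h2 := HA p.1 d b0 (by rw [← hp.2] at hd ⊢; exact hd)
          omega
      have hotherr : ∀ a, a ≠ a0 →
          ((T.filter fun p => p.1 = a).card + (T.filter fun p => p.1 = a0).card ≤ 2*t+2 ∨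
           (T.filter fun p => p.1 = a).card = 0) := by
        intro a ha
        by_cases hz : (T.filter fun p => p.1 = a).card = 0
        · right; exact hz
        · left
          obtain ⟨p, hp⟩ := Finset.card_pos.1 (Nat.pos_of_ne_zero hz)
          simp only [Finset.mem_filter] at hp
          have h1 := eone' p.2 b0 a a0 (by rw [← hp.2]; exact hp.1)
          have h2 := HB p.2 a a0 ha
          omega
      -- column b0 count ≤ n, row a0 count ≤ n
      have hsplitc : ∑ b ∈ univ.erase b0, (T.filter fun p => p.2 = b).card
          + (T.filter fun p => p.2 = b0).card = ∑ b : Fin n, (T.filter fun p => p.2 = b).card :=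
        Finset.sum_erase_add _ _ (mem_univ _)
      have hsplitr : ∑ a ∈ univ.erase a0, (T.filter fun p => p.1 = a).card
          + (T.filter fun p => p.1 = a0).card = ∑ a : Fin n, (T.filter fun p => p.1 = a).card :=
        Finset.sum_erase_add _ _ (mem_univ _)
      have hcard_erase : (univ.erase b0).card = n - 1 := by
        rw [Finset.card_erase_of_mem (mem_univ _), Finset.card_univ, Fintype.card_fin]
      by_cases hq2 : 2 ≤ n / (t+1)
      · -- enough: T.card ≤ t*n + 2
        have hgoal : T.card ≤ t*n + 2 := by
          by_cases hM' : (T.filter fun p => p.2 = b0).card ≤ 2*t+2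
          · set M := (T.filter fun p => p.2 = b0).card with hM
            have hsum1 : ∑ b ∈ univ.erase b0, (T.filter fun p => p.2 = b).card
                ≤ (n-1) * (2*t+2-M) := by
              calc ∑ b ∈ univ.erase b0, (T.filter fun p => p.2 = b).card
                  ≤ (univ.erase b0).card * (2*t+2-M) := by
                    apply Finset.sum_le_card_nsmul
                    intro d hd
                    have := hotherc d (Finset.ne_of_mem_erase hd)
                    omega
                _ = (n-1) * (2*t+2-M) := by rw [hcard_erase]
            -- integer reasoning
            have hcast : (T.card : ℤ) ≤ M + ((n:ℤ)-1) * (2*t+2-M) := by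
              have h0 : T.card = ∑ b ∈ univ.erase b0, (T.filter fun p => p.2 = b).card + M := by
                rw [hfibc, ← hsplitc]
              have h1 : (T.card : ℤ) ≤ ((n-1) * (2*t+2-M) : ℕ) + (M:ℤ) := by
                exact_mod_cast by omega
              rw [Nat.cast_mul, Nat.cast_sub hM', Nat.cast_sub (by omega : 1 ≤ n)] at h1
              push_cast at h1
              linarith
            have hM2 : ((t:ℤ) + 2) ≤ (M:ℤ) := by exact_mod_cast hb0'
            have hn2 : ((2:ℤ)) ≤ (n:ℤ) := by exact_mod_cast (show 2 ≤ n by omega)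
            have hprod : (0:ℤ) ≤ ((M:ℤ) - ((t:ℤ)+2)) * ((n:ℤ) - 2) :=
              mul_nonneg (by linarith) (by linarith)
            have hfin : (T.card : ℤ) ≤ (t:ℤ)*n + 2 := by nlinarith [hcast, hprod]
            exact_mod_cast hfin
          · -- huge column: all other columns empty
            have hzero : ∀ d, d ≠ b0 → (T.filter fun p => p.2 = d).card = 0 := by
              intro d hd
              rcases hotherc d hd with h | h
              · omega
              · exact h
            have hTeq : T.card ≤ n := by
              have h0 : ∑ b ∈ univ.erase b0, (T.filter fun p => p.2 = b).card = 0 := by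
                apply Finset.sum_eq_zero
                intro d hd
                exact hzero d (Finset.ne_of_mem_erase hd)
              have := hcoln b0
              omega
            have hnt : n ≤ t*n := by
              calc n = 1*n := (one_mul n).symm
                _ ≤ t*n := Nat.mul_le_mul_right n ht
            omega
        omega
      · -- q = 1
        have hq1 : n / (t+1) = 1 := by
          have h1 : 1 ≤ n / (t+1) := by
            rw [Nat.le_div_iff_mul_le htp]; omega
          omega
        have ht4 : 3 ≤ t := by
          have h2 : n / (t+1) < 2 := by omega
          rw [Nat.div_lt_iff_lt_mul htp] at h2
          omega
        rw [hq1]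
        by_contra hbig'
        have hbig : t*n + 2 ≤ T.card := by omega
        -- structure of columns
        obtain ⟨hcb0, hccols⟩ := struct n t (by omega) ht
          (fun b => (T.filter fun p => p.2 = b).card) b0 hb0' (hcoln b0) hotherc
          (by rw [← hfibc]; exact hbig)
        obtain ⟨hra0, hrrows⟩ := struct n t (by omega) ht
          (fun a => (T.filter fun p => p.1 = a).card) a0 ha0' (hrown a0) hotherr
          (by rw [← hfibr]; exact hbig)
        -- pick a cell in column b0
        obtain ⟨p, hp⟩ := Finset.card_pos.1 (show 0 < (T.filter fun p => p.2 = b0).card by omega)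
        simp only [Finset.mem_filter] at hp
        set a1 := p.1 with ha1
        have hpa1 : (a1, b0) ∈ T := by
          rw [ha1, ← hp.2]; exact hp.1
        have hra1 : t ≤ (T.filter fun p => p.1 = a1).card := by
          by_cases h : a1 = a0
          · rw [h]; omega
          · rw [hrrows a1 h]
        -- row a1 has a cell outside column b0
        have hsplita1 := Finset.card_filter_add_card_filter_not
          (s := T.filter (fun p : Fin n × Fin n => p.1 = a1)) (p := fun p => p.2 = b0)
        rw [Finset.filter_filter, Finset.filter_filter] at hsplita1
        have hone : (T.filter fun p : Fin n × Fin n => p.1 = a1 ∧ p.2 = b0).card ≤ 1 := by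
          have hsub : (T.filter fun p : Fin n × Fin n => p.1 = a1 ∧ p.2 = b0) ⊆ {(a1, b0)} := by
            intro z hz
            simp only [Finset.mem_filter] at hz
            simp [Prod.ext_iff, hz.2.1, hz.2.2]
          calc _ ≤ ({(a1,b0)} : Finset (Fin n × Fin n)).card := Finset.card_le_card hsub
            _ = 1 := Finset.card_singleton _
        have hpos : 0 < (T.filter fun p : Fin n × Fin n => p.1 = a1 ∧ ¬ p.2 = b0).card := by
          omega
        obtain ⟨w, hw⟩ := Finset.card_pos.1 hpos
        simp only [Finset.mem_filter] at hw
        have hwT : (a1, w.2) ∈ T := by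
          have : (a1, w.2) = w := by
            rw [Prod.ext_iff]; exact ⟨hw.2.1.symm, rfl⟩
          rw [this]; exact hw.1
        have hwne : b0 ≠ w.2 := fun h => hw.2.2 h.symm
        have hE := epair a1 b0 w.2 hwne hpa1 hwT
        have hHA := HA a1 b0 w.2 hwne
        have hcw : (T.filter fun p => p.2 = w.2).card = t := hccols w.2 (fun h => hw.2.2 h)
        omega

theorem cardlt (n t : ℕ) (h : t ≤ n) : (univ.filter fun v : Fin n => v.val < t).card = t := by
  rw [Finset.card_filter]
  rw [Fin.sum_univ_eq_sum_range (fun i => if i < t then 1 else 0)]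
  rw [← Finset.card_filter]
  have : filter (fun i => i < t) (range n) = range t := by
    ext i; simp [mem_range]; intro h2; omega
  rw [this, card_range]

section Constr
variable {n t : ℕ} [NeZero n]
open Fin.NatCast

theorem finsub (u v : Fin n) : (u - v).val = (u.val + (n - v.val)) % n := by
  rw [Fin.sub_def]; simp [Nat.add_comm]

theorem sub_val_cases (u v : Fin n) :
    (u - v).val = if v.val ≤ u.val then u.val - v.val else u.val + n - v.val := by
  have hu := u.isLt
  have hv := v.isLt
  rcases le_or_gt v.val u.val with h | h
  · rw [finsub, if_pos h]
    have e : u.val + (n - v.val) = n + (u.val - v.val) := by omega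
    rw [e, Nat.add_mod_left, Nat.mod_eq_of_lt (by omega)]
  · rw [finsub, if_neg (by omega)]
    have e : u.val + (n - v.val) = u.val + n - v.val := by omega
    rw [e, Nat.mod_eq_of_lt (by omega)]

-- positions
def bs (n t : ℕ) [NeZero n] (s : ℕ) : Fin n := (↑(s*(t+1)) : Fin n)
def as' (n t : ℕ) [NeZero n] (s : ℕ) : Fin n := bs n t s - (t : Fin n)

theorem bs_val (ht3 : t + 3 ≤ n) (s : ℕ) (hs : s < n/(t+1)) :
    (bs n t s).val = s*(t+1) ∧ s*(t+1) + (t+1) ≤ n := by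
  have h1 : (s+1)*(t+1) ≤ (n/(t+1))*(t+1) := Nat.mul_le_mul_right _ hs
  have h2 : (n/(t+1))*(t+1) ≤ n := Nat.div_mul_le_self n (t+1)
  have h3 : s*(t+1) + (t+1) ≤ n := by
    have : (s+1)*(t+1) = s*(t+1) + (t+1) := by ring
    omega
  constructor
  · rw [bs, Fin.val_natCast, Nat.mod_eq_of_lt (by omega)]
  · exact h3

theorem t_val (ht3 : t + 3 ≤ n) : ((t : Fin n)).val = t := by
  rw [Fin.val_natCast, Nat.mod_eq_of_lt (by omega)]

theorem as_val (ht3 : t + 3 ≤ n) (s : ℕ) (hs : s < n/(t+1)) :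
    (bs n t s - as' n t s).val = t := by
  rw [as', sub_sub_cancel, t_val ht3]

-- the key separation: distance between two heavy columns
theorem bs_sub_val (ht3 : t + 3 ≤ n) {s s' : ℕ} (hs : s < n/(t+1)) (hs' : s' < s) :
    t + 1 ≤ (bs n t s - bs n t s').val ∧ (bs n t s - bs n t s').val + t + 1 ≤ n := by
  obtain ⟨hv, hb⟩ := bs_val ht3 s hs
  obtain ⟨hv', hb'⟩ := bs_val ht3 s' (by omega)
  have hmul : (s'+1)*(t+1) ≤ s*(t+1) := Nat.mul_le_mul_right _ (by omega)
  have hexp : (s'+1)*(t+1) = s'*(t+1) + (t+1) := by ring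
  rw [sub_val_cases, hv, hv', if_pos (by omega)]
  omega

-- no common row for two heavy columns
theorem disjC (ht3 : t + 3 ≤ n) {s s' : ℕ} (hs : s < n/(t+1)) (hs' : s' < n/(t+1))
    (hne : s ≠ s') (i : Fin n) :
    ¬((bs n t s - i).val ≤ t ∧ (bs n t s' - i).val ≤ t) := by
  -- wlog via both orders
  rintro ⟨h1, h2⟩
  have key : ∀ s1 s2, s1 < n/(t+1) → s2 < s1 →
      (bs n t s1 - i).val ≤ t → (bs n t s2 - i).val ≤ t → False := by
    intro s1 s2 hs1 hs2 hu hv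
    have hD := bs_sub_val ht3 hs1 hs2
    have heq : bs n t s1 - i - (bs n t s2 - i) = bs n t s1 - bs n t s2 :=
      sub_sub_sub_cancel_right _ _ _
    have := sub_val_cases (bs n t s1 - i) (bs n t s2 - i)
    rw [heq] at this
    have hu' := (bs n t s1 - i).isLt
    have hv' := (bs n t s2 - i).isLt
    split_ifs at this <;> omega
  rcases Nat.lt_or_ge s s' with h | h
  · exact key s' s hs' h h2 h1
  · exact key s s' hs (by omega) h1 h2

theorem as_sub_val (ht3 : t + 3 ≤ n) {s s' : ℕ} (hs : s < n/(t+1)) (hs' : s' < s) :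
    t + 1 ≤ (as' n t s - as' n t s').val ∧ (as' n t s - as' n t s').val + t + 1 ≤ n := by
  have heq : as' n t s - as' n t s' = bs n t s - bs n t s' := by
    rw [as', as', sub_sub_sub_cancel_right]
  rw [heq]; exact bs_sub_val ht3 hs hs'

theorem disjR (ht3 : t + 3 ≤ n) {s s' : ℕ} (hs : s < n/(t+1)) (hs' : s' < n/(t+1))
    (hne : s ≠ s') (j : Fin n) :
    ¬((j - as' n t s).val ≤ t ∧ (j - as' n t s').val ≤ t) := by
  rintro ⟨h1, h2⟩
  have key : ∀ s1 s2, s1 < n/(t+1) → s2 < s1 →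
      (j - as' n t s1).val ≤ t → (j - as' n t s2).val ≤ t → False := by
    intro s1 s2 hs1 hs2 hu hv
    have hD := as_sub_val ht3 hs1 hs2
    have heq : j - as' n t s2 - (j - as' n t s1) = as' n t s1 - as' n t s2 := by
      abel
    have := sub_val_cases (j - as' n t s2) (j - as' n t s1)
    rw [heq] at this
    have hu' := (j - as' n t s1).isLt
    have hv' := (j - as' n t s2).isLt
    split_ifs at this <;> omega
  rcases Nat.lt_or_ge s s' with h | h
  · exact key s' s hs' h h2 h1
  · exact key s s' hs (by omega) h1 h2

theorem bs_inj (ht3 : t + 3 ≤ n) {s s' : ℕ} (hs : s < n/(t+1)) (hs' : s' < n/(t+1))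
    (h : bs n t s = bs n t s') : s = s' := by
  by_contra hne
  rcases Nat.lt_or_ge s' s with hlt | hge
  · have := bs_sub_val ht3 hs hlt
    rw [h, sub_self] at this
    simp at this
  · have hlt : s < s' := by omega
    have := bs_sub_val ht3 hs' hlt
    rw [h, sub_self] at this
    simp at this

theorem as_inj (ht3 : t + 3 ≤ n) {s s' : ℕ} (hs : s < n/(t+1)) (hs' : s' < n/(t+1))
    (h : as' n t s = as' n t s') : s = s' := by
  apply bs_inj ht3 hs hs'
  have : as' n t s + (t : Fin n) = as' n t s' + (t : Fin n) := by rw [h]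
  rw [as', as', sub_add_cancel, sub_add_cancel] at this
  exact this

end Constr

section Constr2
variable {n t : ℕ} [NeZero n]
open Fin.NatCast


def T0 (n t : ℕ) [NeZero n] : Finset (Fin n × Fin n) :=
  univ.filter fun p => ((p.2 - p.1 : Fin n)).val < t

def XX (n t : ℕ) [NeZero n] : Finset (Fin n × Fin n) :=
  (range (n/(t+1))).image (fun s => (as' n t s, bs n t s))

def TT (n t : ℕ) [NeZero n] : Finset (Fin n × Fin n) := T0 n t ∪ XX n t

theorem mem_T0 (p : Fin n × Fin n) : p ∈ T0 n t ↔ ((p.2 - p.1 : Fin n)).val < t := by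
  simp [T0]

theorem mem_XX (p : Fin n × Fin n) :
    p ∈ XX n t ↔ ∃ s < n/(t+1), p = (as' n t s, bs n t s) := by
  simp [XX, eq_comm]

theorem hdisjTX (ht3 : t + 3 ≤ n) : Disjoint (T0 n t) (XX n t) := by
  rw [Finset.disjoint_left]
  intro p hp hx
  rw [mem_T0] at hp
  rw [mem_XX] at hx
  obtain ⟨s, hs, rfl⟩ := hx
  simp only at hp
  rw [as_val ht3 s hs] at hp
  omega

theorem colmem (ht3 : t + 3 ≤ n) (s : ℕ) (hs : s < n/(t+1)) (i : Fin n)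
    (h : (i, bs n t s) ∈ TT n t) : (bs n t s - i).val ≤ t := by
  rw [TT, Finset.mem_union, mem_T0, mem_XX] at h
  rcases h with h | h
  · simp only at h; omega
  · obtain ⟨s', hs', heq⟩ := h
    rw [Prod.mk.injEq] at heq
    have hss : s' = s := bs_inj ht3 hs' hs (heq.2.symm)
    subst hss
    rw [heq.1, as_val ht3 s' hs']
theorem rowmem (ht3 : t + 3 ≤ n) (s : ℕ) (hs : s < n/(t+1)) (j : Fin n)
    (h : (as' n t s, j) ∈ TT n t) : (j - as' n t s).val ≤ t := by
  rw [TT, Finset.mem_union, mem_T0, mem_XX] at h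
  rcases h with h | h
  · simp only at h; omega
  · obtain ⟨s', hs', heq⟩ := h
    rw [Prod.mk.injEq] at heq
    have hss : s' = s := as_inj ht3 hs' hs (heq.1.symm)
    subst hss
    rw [heq.2, as_val ht3 s' hs']

theorem c0 (ht3 : t + 3 ≤ n) (b : Fin n) : ((T0 n t).filter fun p => p.2 = b).card = t := by
  rw [← col_card_eq]
  have he : (univ.filter fun i : Fin n => (i, b) ∈ T0 n t)
      = univ.filter fun i : Fin n => (b - i).val < t := by
    apply Finset.filter_congr; intro i _; rw [mem_T0]
  rw [he]
  rw [show (univ.filter fun i : Fin n => (b - i).val < t).card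
      = (univ.filter fun v : Fin n => v.val < t).card from ?_]
  · exact cardlt n t (by omega)
  · apply Finset.card_bij (fun i _ => b - i)
    · intro i hi; simp only [Finset.mem_filter] at hi ⊢; exact ⟨mem_univ _, hi.2⟩
    · intro i _ j _ h; exact sub_right_injective h
    · intro v hv
      simp only [Finset.mem_filter] at hv
      exact ⟨b - v, by simp [sub_sub_cancel, hv.2]⟩

theorem r0 (ht3 : t + 3 ≤ n) (a : Fin n) : ((T0 n t).filter fun p => p.1 = a).card = t := by
  rw [← row_card_eq]
  have he : (univ.filter fun j : Fin n => (a, j) ∈ T0 n t)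
      = univ.filter fun j : Fin n => (j - a).val < t := by
    apply Finset.filter_congr; intro j _; rw [mem_T0]
  rw [he]
  rw [show (univ.filter fun j : Fin n => (j - a).val < t).card
      = (univ.filter fun v : Fin n => v.val < t).card from ?_]
  · exact cardlt n t (by omega)
  · apply Finset.card_bij (fun j _ => j - a)
    · intro j hj; simp only [Finset.mem_filter] at hj ⊢; exact ⟨mem_univ _, hj.2⟩
    · intro i _ j _ h; exact sub_left_injective h
    · intro v hv
      simp only [Finset.mem_filter] at hv
      exact ⟨v + a, by simp [add_sub_cancel_right, hv.2]⟩

theorem cX (ht3 : t + 3 ≤ n) (b : Fin n) :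
    ((XX n t).filter fun p => p.2 = b).card
      = if ∃ s < n/(t+1), b = bs n t s then 1 else 0 := by
  split_ifs with h
  · obtain ⟨s, hs, rfl⟩ := h
    have he : ((XX n t).filter fun p => p.2 = bs n t s) = {(as' n t s, bs n t s)} := by
      ext p
      simp only [Finset.mem_filter, mem_XX, Finset.mem_singleton]
      constructor
      · rintro ⟨⟨s', hs', rfl⟩, h2⟩
        simp only at h2
        rw [bs_inj ht3 hs' hs h2]
      · rintro rfl
        exact ⟨⟨s, hs, rfl⟩, rfl⟩
    rw [he, Finset.card_singleton]
  · rw [Finset.card_eq_zero, Finset.filter_eq_empty_iff]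
    intro p hp
    rw [mem_XX] at hp
    obtain ⟨s, hs, rfl⟩ := hp
    intro h2
    exact h ⟨s, hs, h2.symm⟩

theorem rX (ht3 : t + 3 ≤ n) (a : Fin n) :
    ((XX n t).filter fun p => p.1 = a).card
      = if ∃ s < n/(t+1), a = as' n t s then 1 else 0 := by
  split_ifs with h
  · obtain ⟨s, hs, rfl⟩ := h
    have he : ((XX n t).filter fun p => p.1 = as' n t s) = {(as' n t s, bs n t s)} := by
      ext p
      simp only [Finset.mem_filter, mem_XX, Finset.mem_singleton]
      constructor
      · rintro ⟨⟨s', hs', rfl⟩, h2⟩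
        simp only at h2
        rw [as_inj ht3 hs' hs h2]
      · rintro rfl
        exact ⟨⟨s, hs, rfl⟩, rfl⟩
    rw [he, Finset.card_singleton]
  · rw [Finset.card_eq_zero, Finset.filter_eq_empty_iff]
    intro p hp
    rw [mem_XX] at hp
    obtain ⟨s, hs, rfl⟩ := hp
    intro h2
    exact h ⟨s, hs, h2.symm⟩

theorem cTT (ht3 : t + 3 ≤ n) (b : Fin n) :
    ((TT n t).filter fun p => p.2 = b).card
      = t + (if ∃ s < n/(t+1), b = bs n t s then 1 else 0) := by
  rw [TT, Finset.filter_union, Finset.card_union_of_disjoint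
    (Finset.disjoint_filter_filter (hdisjTX ht3)), c0 ht3, cX ht3]

theorem rTT (ht3 : t + 3 ≤ n) (a : Fin n) :
    ((TT n t).filter fun p => p.1 = a).card
      = t + (if ∃ s < n/(t+1), a = as' n t s then 1 else 0) := by
  rw [TT, Finset.filter_union, Finset.card_union_of_disjoint
    (Finset.disjoint_filter_filter (hdisjTX ht3)), r0 ht3, rX ht3]

theorem cardXX (ht3 : t + 3 ≤ n) : (XX n t).card = n/(t+1) := by
  rw [XX, Finset.card_image_of_injOn, Finset.card_range]
  intro s hs s' hs' h
  simp only [Finset.mem_coe, Finset.mem_range] at hs hs'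
  rw [Prod.mk.injEq] at h
  exact bs_inj ht3 hs hs' h.2

theorem cardT0 (ht3 : t + 3 ≤ n) : (T0 n t).card = t * n := by
  rw [Finset.card_eq_sum_card_fiberwise (f := Prod.snd) (t := univ) (fun x _ => mem_univ _)]
  rw [Finset.sum_congr rfl (fun b _ => c0 ht3 b), Finset.sum_const, Finset.card_univ,
    Fintype.card_fin, smul_eq_mul, mul_comm]

theorem cardTT (ht3 : t + 3 ≤ n) : (TT n t).card = t*n + n/(t+1) := by
  rw [TT, Finset.card_union_of_disjoint (hdisjTX ht3), cardXX ht3, cardT0 ht3]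

end Constr2

section Verify
variable {n t : ℕ} [NeZero n]
open Fin.NatCast

theorem efilter_le2 (T : Finset (Fin n × Fin n)) (a b d : Fin n) :
    (T.filter fun p => p.1 = a ∧ (p.2 = b ∨ p.2 = d)).card ≤ 2 := by
  have hsub : (T.filter fun p => p.1 = a ∧ (p.2 = b ∨ p.2 = d)) ⊆ {(a,b),(a,d)} := by
    rintro ⟨u,v⟩ hz
    simp only [Finset.mem_filter] at hz
    obtain ⟨_, h1, h2⟩ := hz
    simp only [Finset.mem_insert, Finset.mem_singleton, Prod.mk.injEq]
    rcases h2 with h2 | h2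
    · left; exact ⟨h1, h2⟩
    · right; exact ⟨h1, h2⟩
  calc _ ≤ ({(a,b),(a,d)} : Finset (Fin n × Fin n)).card := Finset.card_le_card hsub
    _ ≤ 2 := (Finset.card_insert_le _ _).trans (by simp)

theorem efilter_le1 (T : Finset (Fin n × Fin n)) (a b d : Fin n)
    (hnot : ¬((a,b) ∈ T ∧ (a,d) ∈ T)) :
    (T.filter fun p => p.1 = a ∧ (p.2 = b ∨ p.2 = d)).card ≤ 1 := by
  by_cases hab : (a,b) ∈ T
  · have had : (a,d) ∉ T := fun h => hnot ⟨hab, h⟩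
    have hsub : (T.filter fun p => p.1 = a ∧ (p.2 = b ∨ p.2 = d)) ⊆ {(a,b)} := by
      rintro ⟨u,v⟩ hz
      simp only [Finset.mem_filter] at hz
      obtain ⟨hzT, h1, h2⟩ := hz
      subst h1
      rcases h2 with h2 | h2
      · subst h2; simp
      · subst h2; exact absurd hzT had
    calc _ ≤ _ := Finset.card_le_card hsub
      _ = 1 := Finset.card_singleton _
  · have hsub : (T.filter fun p => p.1 = a ∧ (p.2 = b ∨ p.2 = d)) ⊆ {(a,d)} := by
      rintro ⟨u,v⟩ hz
      simp only [Finset.mem_filter] at hz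
      obtain ⟨hzT, h1, h2⟩ := hz
      subst h1
      rcases h2 with h2 | h2
      · subst h2; exact absurd hzT hab
      · subst h2; simp
    calc _ ≤ _ := Finset.card_le_card hsub
      _ = 1 := Finset.card_singleton _

theorem e'filter_le2 (T : Finset (Fin n × Fin n)) (b a c : Fin n) :
    (T.filter fun p => p.2 = b ∧ (p.1 = a ∨ p.1 = c)).card ≤ 2 := by
  have hsub : (T.filter fun p => p.2 = b ∧ (p.1 = a ∨ p.1 = c)) ⊆ {(a,b),(c,b)} := by
    rintro ⟨u,v⟩ hz
    simp only [Finset.mem_filter] at hz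
    obtain ⟨_, h1, h2⟩ := hz
    simp only [Finset.mem_insert, Finset.mem_singleton, Prod.mk.injEq]
    rcases h2 with h2 | h2
    · left; exact ⟨h2, h1⟩
    · right; exact ⟨h2, h1⟩
  calc _ ≤ ({(a,b),(c,b)} : Finset (Fin n × Fin n)).card := Finset.card_le_card hsub
    _ ≤ 2 := (Finset.card_insert_le _ _).trans (by simp)

theorem e'filter_le1 (T : Finset (Fin n × Fin n)) (b a c : Fin n)
    (hnot : ¬((a,b) ∈ T ∧ (c,b) ∈ T)) :
    (T.filter fun p => p.2 = b ∧ (p.1 = a ∨ p.1 = c)).card ≤ 1 := by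
  by_cases hab : (a,b) ∈ T
  · have had : (c,b) ∉ T := fun h => hnot ⟨hab, h⟩
    have hsub : (T.filter fun p => p.2 = b ∧ (p.1 = a ∨ p.1 = c)) ⊆ {(a,b)} := by
      rintro ⟨u,v⟩ hz
      simp only [Finset.mem_filter] at hz
      obtain ⟨hzT, h1, h2⟩ := hz
      subst h1
      rcases h2 with h2 | h2
      · subst h2; simp
      · subst h2; exact absurd hzT had
    calc _ ≤ _ := Finset.card_le_card hsub
      _ = 1 := Finset.card_singleton _
  · have hsub : (T.filter fun p => p.2 = b ∧ (p.1 = a ∨ p.1 = c)) ⊆ {(c,b)} := by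
      rintro ⟨u,v⟩ hz
      simp only [Finset.mem_filter] at hz
      obtain ⟨hzT, h1, h2⟩ := hz
      subst h1
      rcases h2 with h2 | h2
      · subst h2; exact absurd hzT hab
      · subst h2; simp
    calc _ ≤ _ := Finset.card_le_card hsub
      _ = 1 := Finset.card_singleton _

theorem hXmemTT (s : ℕ) (hs : s < n/(t+1)) : (as' n t s, bs n t s) ∈ TT n t := by
  rw [TT, Finset.mem_union]
  right
  rw [mem_XX]
  exact ⟨s, hs, rfl⟩

theorem HAcon (ht3 : t+3 ≤ n) (a b d : Fin n) (hbd : b ≠ d) :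
    ((TT n t).filter fun p => p.2 = b).card + ((TT n t).filter fun p => p.2 = d).card +
    ((TT n t).filter fun p => p.1 = a ∧ (p.2 = b ∨ p.2 = d)).card ≤ 2*t+3 := by
  rw [cTT ht3, cTT ht3]
  have he2 := efilter_le2 (TT n t) a b d
  by_cases hb : ∃ s < n/(t+1), b = bs n t s
  · by_cases hd : ∃ s < n/(t+1), d = bs n t s
    · obtain ⟨s, hs, rfl⟩ := hb
      obtain ⟨s', hs', rfl⟩ := hd
      have hss : s ≠ s' := fun h => hbd (by rw [h])
      have he1 : ((TT n t).filter fun p =>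
          p.1 = a ∧ (p.2 = bs n t s ∨ p.2 = bs n t s')).card ≤ 1 := by
        apply efilter_le1
        rintro ⟨hx1, hx2⟩
        exact disjC ht3 hs hs' hss a ⟨colmem ht3 s hs a hx1, colmem ht3 s' hs' a hx2⟩
      rw [if_pos ⟨s, hs, rfl⟩, if_pos ⟨s', hs', rfl⟩]
      omega
    · rw [if_neg hd]; split_ifs <;> omega
  · rw [if_neg hb]; split_ifs <;> omega

theorem HBcon (ht3 : t+3 ≤ n) (b a c : Fin n) (hac : a ≠ c) :
    ((TT n t).filter fun p => p.1 = a).card + ((TT n t).filter fun p => p.1 = c).card +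
    ((TT n t).filter fun p => p.2 = b ∧ (p.1 = a ∨ p.1 = c)).card ≤ 2*t+3 := by
  rw [rTT ht3, rTT ht3]
  have he2 := e'filter_le2 (TT n t) b a c
  by_cases ha : ∃ s < n/(t+1), a = as' n t s
  · by_cases hc : ∃ s < n/(t+1), c = as' n t s
    · obtain ⟨s, hs, rfl⟩ := ha
      obtain ⟨s', hs', rfl⟩ := hc
      have hss : s ≠ s' := fun h => hac (by rw [h])
      have he1 : ((TT n t).filter fun p =>
          p.2 = b ∧ (p.1 = as' n t s ∨ p.1 = as' n t s')).card ≤ 1 := by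
        apply e'filter_le1
        rintro ⟨hx1, hx2⟩
        exact disjR ht3 hs hs' hss b ⟨rowmem ht3 s hs b hx1, rowmem ht3 s' hs' b hx2⟩
      rw [if_pos ⟨s, hs, rfl⟩, if_pos ⟨s', hs', rfl⟩]
      omega
    · rw [if_neg hc]; split_ifs <;> omega
  · rw [if_neg ha]; split_ifs <;> omega

theorem constr_res (hn : 6 ≤ n) (ht : 1 ≤ t) (ht3 : t + 3 ≤ n) :
    weakRes (2*n - 2*t - 1) ((TT n t)ᶜ) := by
  have htp : 0 < t + 1 := by omega
  intro x y hxy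
  have hSc : ((TT n t)ᶜ)ᶜ = TT n t := compl_compl _
  obtain ⟨xa, xb⟩ := x
  obtain ⟨ya, yb⟩ := y
  by_cases h1 : xa = ya
  · subst h1
    have hbd : xb ≠ yb := by
      intro h; exact hxy (by rw [h])
    have hid := delS_row ((TT n t)ᶜ) xa xb yb hbd
    rw [hSc] at hid
    have hha := HAcon ht3 xa xb yb hbd
    omega
  · by_cases h2 : xb = yb
    · subst h2
      have hid := delS_col ((TT n t)ᶜ) xb xa ya h1
      rw [hSc] at hid
      have hhb := HBcon ht3 xb xa ya h1
      omega
    · -- diagonal pair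
      have hge := delS_diag_ge ((TT n t)ᶜ) xa ya xb yb h1 h2
      rw [hSc, cTT ht3, cTT ht3, rTT ht3, rTT ht3] at hge
      have hIab : (if (xa,xb) ∈ (TT n t)ᶜ then 1 else 0) ≤ 1 := by split_ifs <;> omega
      have hIcd : (if (ya,yb) ∈ (TT n t)ᶜ then 1 else 0) ≤ 1 := by split_ifs <;> omega
      have hIad : (if (xa,yb) ∈ (TT n t)ᶜ then 1 else 0) ≤ 1 := by split_ifs <;> omega
      have hIcb : (if (ya,xb) ∈ (TT n t)ᶜ then 1 else 0) ≤ 1 := by split_ifs <;> omega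
      have hzero : ∀ p : Fin n × Fin n, p ∈ TT n t →
          (if p ∈ (TT n t)ᶜ then 1 else 0) = 0 := by
        intro p hp
        rw [if_neg]
        simp only [Finset.mem_compl, not_not]
        exact hp
      by_cases ht5 : t + 5 ≤ n
      · have hB1 : (if ∃ s < n/(t+1), xb = bs n t s then 1 else 0) ≤ 1 := by
          split_ifs <;> omega
        have hD1 : (if ∃ s < n/(t+1), yb = bs n t s then 1 else 0) ≤ 1 := by
          split_ifs <;> omega
        have hA1 : (if ∃ s < n/(t+1), xa = as' n t s then 1 else 0) ≤ 1 := by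
          split_ifs <;> omega
        have hC1 : (if ∃ s < n/(t+1), ya = as' n t s then 1 else 0) ≤ 1 := by
          split_ifs <;> omega
        omega
      · -- n ≤ t + 4
        have hAC : (∃ s < n/(t+1), xa = as' n t s) → (∃ s < n/(t+1), ya = as' n t s) →
            2*(t+1) ≤ n := by
          rintro ⟨s, hs, hxa⟩ ⟨s', hs', hya⟩
          have hss : s ≠ s' := fun h => h1 (by rw [hxa, hya, h])
          have h2q : 2 ≤ n/(t+1) := by omega
          exact (Nat.le_div_iff_mul_le htp).1 h2q
        have hBD : (∃ s < n/(t+1), xb = bs n t s) → (∃ s < n/(t+1), yb = bs n t s) →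
            2*(t+1) ≤ n := by
          rintro ⟨s, hs, hxb⟩ ⟨s', hs', hyb⟩
          have hss : s ≠ s' := fun h => h2 (by rw [hxb, hyb, h])
          have h2q : 2 ≤ n/(t+1) := by omega
          exact (Nat.le_div_iff_mul_le htp).1 h2q
        by_cases hA : ∃ s < n/(t+1), xa = as' n t s <;>
          by_cases hC : ∃ s < n/(t+1), ya = as' n t s <;>
          by_cases hB : ∃ s < n/(t+1), xb = bs n t s <;>
          by_cases hD : ∃ s < n/(t+1), yb = bs n t s
        -- 1: A C B D  (4-heavy)
        · have hq2 : 2*(t+1) ≤ n := hAC hA hC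
          have hq3 : n/(t+1) < 3 := by
            rw [Nat.div_lt_iff_lt_mul htp]; omega
          rw [if_pos hA, if_pos hC, if_pos hB, if_pos hD] at hge
          obtain ⟨sA, hsA, hxa⟩ := hA
          obtain ⟨sC, hsC, hya⟩ := hC
          obtain ⟨sB, hsB, hxb⟩ := hB
          obtain ⟨sD, hsD, hyb⟩ := hD
          have hAC' : sA ≠ sC := fun h => h1 (by rw [hxa, hya, h])
          have hBD' : sB ≠ sD := fun h => h2 (by rw [hxb, hyb, h])
          have hor : sA = sB ∨ sA = sD := by omega
          rcases hor with h | h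
          · have hmem : (xa, xb) ∈ TT n t := by
              rw [hxa, hxb, h]; exact hXmemTT sB hsB
            have h0 := hzero _ hmem
            omega
          · have hmem : (xa, yb) ∈ TT n t := by
              rw [hxa, hyb, h]; exact hXmemTT sD hsD
            have h0 := hzero _ hmem
            omega
        -- 2: A C B ¬D (3-heavy)
        · have hq2 : 2*(t+1) ≤ n := hAC hA hC
          rw [if_pos hA, if_pos hC, if_pos hB, if_neg hD] at hge
          omega
        -- 3: A C ¬B D
        · have hq2 : 2*(t+1) ≤ n := hAC hA hC
          rw [if_pos hA, if_pos hC, if_neg hB, if_pos hD] at hge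
          omega
        -- 4: A C ¬B ¬D (2 rows)
        · have hq2 : 2*(t+1) ≤ n := hAC hA hC
          rw [if_pos hA, if_pos hC, if_neg hB, if_neg hD] at hge
          omega
        -- 5: A ¬C B D (3-heavy via cols)
        · have hq2 : 2*(t+1) ≤ n := hBD hB hD
          rw [if_pos hA, if_neg hC, if_pos hB, if_pos hD] at hge
          omega
        -- 6: A ¬C B ¬D (row+col)
        · by_cases ht4 : t + 4 ≤ n
          · rw [if_pos hA, if_neg hC, if_pos hB, if_neg hD] at hge
            omega
          · have hq1 : n/(t+1) = 1 := by
              have ha1 : 1 ≤ n / (t+1) := (Nat.le_div_iff_mul_le htp).2 (by omega)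
              have ha2 : n / (t+1) < 2 := by rw [Nat.div_lt_iff_lt_mul htp]; omega
              omega
            rw [if_pos hA, if_neg hC, if_pos hB, if_neg hD] at hge
            obtain ⟨sA, hsA, hxa⟩ := hA
            obtain ⟨sB, hsB, hxb⟩ := hB
            have hmem : (xa, xb) ∈ TT n t := by
              have e1 : sA = 0 := by omega
              have e2 : sB = 0 := by omega
              rw [hxa, hxb, e1, e2]
              exact hXmemTT 0 (by omega)
            have h0 := hzero _ hmem
            omega
        -- 7: A ¬C ¬B D (row+col)
        · by_cases ht4 : t + 4 ≤ n
          · rw [if_pos hA, if_neg hC, if_neg hB, if_pos hD] at hge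
            omega
          · have hq1 : n/(t+1) = 1 := by
              have ha1 : 1 ≤ n / (t+1) := (Nat.le_div_iff_mul_le htp).2 (by omega)
              have ha2 : n / (t+1) < 2 := by rw [Nat.div_lt_iff_lt_mul htp]; omega
              omega
            rw [if_pos hA, if_neg hC, if_neg hB, if_pos hD] at hge
            obtain ⟨sA, hsA, hxa⟩ := hA
            obtain ⟨sD, hsD, hyb⟩ := hD
            have hmem : (xa, yb) ∈ TT n t := by
              have e1 : sA = 0 := by omega
              have e2 : sD = 0 := by omega
              rw [hxa, hyb, e1, e2]
              exact hXmemTT 0 (by omega)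
            have h0 := hzero _ hmem
            omega
        -- 8: A ¬C ¬B ¬D
        · rw [if_pos hA, if_neg hC, if_neg hB, if_neg hD] at hge
          omega
        -- 9: ¬A C B D
        · have hq2 : 2*(t+1) ≤ n := hBD hB hD
          rw [if_neg hA, if_pos hC, if_pos hB, if_pos hD] at hge
          omega
        -- 10: ¬A C B ¬D (row+col)
        · by_cases ht4 : t + 4 ≤ n
          · rw [if_neg hA, if_pos hC, if_pos hB, if_neg hD] at hge
            omega
          · have hq1 : n/(t+1) = 1 := by
              have ha1 : 1 ≤ n / (t+1) := (Nat.le_div_iff_mul_le htp).2 (by omega)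
              have ha2 : n / (t+1) < 2 := by rw [Nat.div_lt_iff_lt_mul htp]; omega
              omega
            rw [if_neg hA, if_pos hC, if_pos hB, if_neg hD] at hge
            obtain ⟨sC, hsC, hya⟩ := hC
            obtain ⟨sB, hsB, hxb⟩ := hB
            have hmem : (ya, xb) ∈ TT n t := by
              have e1 : sC = 0 := by omega
              have e2 : sB = 0 := by omega
              rw [hya, hxb, e1, e2]
              exact hXmemTT 0 (by omega)
            have h0 := hzero _ hmem
            omega
        -- 11: ¬A C ¬B D (row+col)
        · by_cases ht4 : t + 4 ≤ n
          · rw [if_neg hA, if_pos hC, if_neg hB, if_pos hD] at hge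
            omega
          · have hq1 : n/(t+1) = 1 := by
              have ha1 : 1 ≤ n / (t+1) := (Nat.le_div_iff_mul_le htp).2 (by omega)
              have ha2 : n / (t+1) < 2 := by rw [Nat.div_lt_iff_lt_mul htp]; omega
              omega
            rw [if_neg hA, if_pos hC, if_neg hB, if_pos hD] at hge
            obtain ⟨sC, hsC, hya⟩ := hC
            obtain ⟨sD, hsD, hyb⟩ := hD
            have hmem : (ya, yb) ∈ TT n t := by
              have e1 : sC = 0 := by omega
              have e2 : sD = 0 := by omega
              rw [hya, hyb, e1, e2]
              exact hXmemTT 0 (by omega)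
            have h0 := hzero _ hmem
            omega
        -- 12: ¬A C ¬B ¬D
        · rw [if_neg hA, if_pos hC, if_neg hB, if_neg hD] at hge
          omega
        -- 13: ¬A ¬C B D (2 cols)
        · have hq2 : 2*(t+1) ≤ n := hBD hB hD
          rw [if_neg hA, if_neg hC, if_pos hB, if_pos hD] at hge
          omega
        -- 14: ¬A ¬C B ¬D
        · rw [if_neg hA, if_neg hC, if_pos hB, if_neg hD] at hge
          omega
        -- 15: ¬A ¬C ¬B D
        · rw [if_neg hA, if_neg hC, if_neg hB, if_pos hD] at hge
          omega
        -- 16: none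
        · rw [if_neg hA, if_neg hC, if_neg hB, if_neg hD] at hge
          omega

end Verify

theorem stmt18' (n t : ℕ) (hn : 6 ≤ n) (ht : 1 ≤ t) (ht3 : t + 3 ≤ n) :
    wdim n (2 * n - 2 * t - 1) = n ^ 2 - t * n - n / (t + 1) := by
  haveI : NeZero n := ⟨by omega⟩
  have htp : 0 < t + 1 := by omega
  have hcardU : Fintype.card (Fin n × Fin n) = n * n := by
    rw [Fintype.card_prod, Fintype.card_fin]
  have hpow : n^2 = n*n := by ring
  have hTTle : (TT n t).card ≤ n*n := by
    calc (TT n t).card ≤ (univ : Finset (Fin n × Fin n)).card := Finset.card_le_univ _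
      _ = n*n := by rw [Finset.card_univ, hcardU]
  have hcardS : ((TT n t)ᶜ).card = n^2 - t*n - n/(t+1) := by
    rw [Finset.card_compl, hcardU, cardTT ht3, hpow]
    omega
  have hmem : (n^2 - t*n - n/(t+1)) ∈
      {m | ∃ S : Finset (Fin n × Fin n), weakRes (2*n-2*t-1) S ∧ S.card = m} :=
    ⟨(TT n t)ᶜ, constr_res hn ht ht3, hcardS⟩
  have hlow : ∀ m ∈ {m | ∃ S : Finset (Fin n × Fin n), weakRes (2*n-2*t-1) S ∧ S.card = m},
      n^2 - t*n - n/(t+1) ≤ m := by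
    rintro m ⟨S, hres, rfl⟩
    have hHA : ∀ a b d : Fin n, b ≠ d →
        (Sᶜ.filter fun p => p.2 = b).card + (Sᶜ.filter fun p => p.2 = d).card +
        (Sᶜ.filter fun p => p.1 = a ∧ (p.2 = b ∨ p.2 = d)).card ≤ 2*t+3 := by
      intro a b d hbd
      have hid := delS_row S a b d hbd
      have hres' := hres (a,b) (a,d) (by simp [Prod.ext_iff, hbd])
      omega
    have hHB : ∀ b a c : Fin n, a ≠ c →
        (Sᶜ.filter fun p => p.1 = a).card + (Sᶜ.filter fun p => p.1 = c).card +
        (Sᶜ.filter fun p => p.2 = b ∧ (p.1 = a ∨ p.1 = c)).card ≤ 2*t+3 := by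
      intro b a c hac
      have hid := delS_col S b a c hac
      have hres' := hres (a,b) (c,b) (by simp [Prod.ext_iff, hac])
      omega
    have hext := EXT hn ht ht3 Sᶜ hHA hHB
    have hcc : S.card + Sᶜ.card = n*n := by
      rw [Finset.card_add_card_compl, hcardU]
    have hqn : n/(t+1) ≤ n := Nat.div_le_self _ _
    have htn : t*n ≤ n*n := Nat.mul_le_mul_right n (by omega)
    omega
  rw [wdim]
  apply le_antisymm
  · exact Nat.sInf_le hmem
  · exact le_csInf ⟨_, hmem⟩ hlow

theorem stmt_18 (n t : ℕ) (hn : 6 ≤ n) (ht : 1 ≤ t) (ht' : t ≤ n - 3) :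
    wdim n (2 * n - 2 * t - 1) = n ^ 2 - t * n - n / (t + 1) := by
  exact stmt18' n t hn ht (by omega)
end

section
/- For every integer n ≥ 4 and any two distinct vertices x, y of K_n × K_n: if x and y lie in the same layer then Δ(x,y) = 2n + 2, and if they lie in different layers then Δ(x,y) = 4n − 6, where Δ(x,y) = Σ_{z ∈ V} |d(x,z) − d(y,z)|. -/
open Finset

lemma sum_pair_aux {n : ℕ} (b d : Fin n) (hbd : b ≠ d) (k : ℕ) :
    ∑ v : Fin n, (if v = b ∨ v = d then k else 0) = 2 * k := by
  have h : ∀ v : Fin n, (if v = b ∨ v = d then k else 0)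
      = (if v = b then k else 0) + (if v = d then k else 0) := by
    intro v
    by_cases h1 : v = b <;> by_cases h2 : v = d <;> simp_all
  simp only [h, Finset.sum_add_distrib, Finset.sum_ite_eq', Finset.mem_univ, if_true]
  ring

lemma sum_onept_aux {n : ℕ} (b : Fin n) :
    ∑ v : Fin n, (if v = b then 2 else 1) = n + 1 := by
  have h : ∀ v : Fin n, (if v = b then 2 else 1) = 1 + (if v = b then 1 else 0) := by
    intro v; split <;> rfl
  simp [h, Finset.sum_add_distrib, Finset.sum_ite_eq']

lemma sum_nept_aux {n : ℕ} (b : Fin n) :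
    ∑ v : Fin n, (if v = b then 0 else 1) = n - 1 := by
  have h2 : (∑ v : Fin n, (if v = b then 0 else 1))
      + (∑ v : Fin n, (if v = b then 1 else 0)) = n := by
    rw [← Finset.sum_add_distrib]
    have h : ∀ v : Fin n, (if v = b then 0 else 1) + (if v = b then 1 else 0) = 1 := by
      intro v; split <;> rfl
    simp [h]
  have h3 : (∑ v : Fin n, (if v = b then 1 else 0)) = 1 := by
    simp [Finset.sum_ite_eq']
  omega

theorem stmt_19 (n : ℕ) (hn : 4 ≤ n) (x y : Fin n × Fin n) (hxy : x ≠ y) :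
    (x.1 = y.1 ∨ x.2 = y.2 → delS Finset.univ x y = 2 * n + 2) ∧
    (x.1 ≠ y.1 ∧ x.2 ≠ y.2 → delS Finset.univ x y = 4 * n - 6) := by
  obtain ⟨a, b⟩ := x
  obtain ⟨c, d⟩ := y
  constructor
  · rintro (h | h)
    · -- a = c, b ≠ d
      simp only at h
      subst h
      have hbd : b ≠ d := by
        intro hbd; exact hxy (by simp [hbd])
      have key : ∀ u v : Fin n, ((dd (a, b) (u, v) : ℤ) - (dd (a, d) (u, v) : ℤ)).natAbs
          = (if u = a then (if v = b ∨ v = d then 2 else 0)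
             else (if v = b ∨ v = d then 1 else 0)) := by
        intro u v
        simp only [dd, Prod.mk.injEq]
        by_cases h1 : u = a <;> by_cases h2 : v = b <;> by_cases h3 : v = d <;>
          simp_all <;> omega
      rw [delS, Fintype.sum_prod_type]
      simp only [key]
      have step : ∀ u : Fin n,
          (∑ v : Fin n, (if u = a then (if v = b ∨ v = d then 2 else 0)
             else (if v = b ∨ v = d then 1 else 0))) = (if u = a then 4 else 2) := by
        intro u
        by_cases h : u = a <;> simp [h, sum_pair_aux b d hbd]
      rw [Finset.sum_congr rfl (fun u _ => step u)]
      have h4 : ∀ u : Fin n, (if u = a then 4 else 2) = 2 + (if u = a then 2 else 0) := by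
        intro u; split <;> rfl
      simp only [h4, Finset.sum_add_distrib, Finset.sum_const, Finset.card_univ,
        Fintype.card_fin, Finset.sum_ite_eq', Finset.mem_univ, if_true, smul_eq_mul]
      ring
    · -- b = d, a ≠ c
      simp only at h
      subst h
      have hac : a ≠ c := by
        intro hac; exact hxy (by simp [hac])
      have key : ∀ u v : Fin n, ((dd (a, b) (u, v) : ℤ) - (dd (c, b) (u, v) : ℤ)).natAbs
          = (if u = a ∨ u = c then (if v = b then 2 else 1) else 0) := by
        intro u v
        simp only [dd, Prod.mk.injEq]
        by_cases h1 : u = a <;> by_cases h2 : u = c <;> by_cases h3 : v = b <;>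
          simp_all <;> omega
      rw [delS, Fintype.sum_prod_type]
      simp only [key]
      have step : ∀ u : Fin n,
          (∑ v : Fin n, (if u = a ∨ u = c then (if v = b then 2 else 1) else 0))
          = (if u = a ∨ u = c then n + 1 else 0) := by
        intro u
        by_cases h : u = a ∨ u = c <;> simp [h, sum_onept_aux b]
      rw [Finset.sum_congr rfl (fun u _ => step u)]
      rw [sum_pair_aux a c hac (n + 1)]
      ring
  · rintro ⟨h1, h2⟩
    simp only at h1 h2
    have key : ∀ u v : Fin n, ((dd (a, b) (u, v) : ℤ) - (dd (c, d) (u, v) : ℤ)).natAbs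
        = (if u = a then (if v = d then 0 else 1)
           else if u = c then (if v = b then 0 else 1)
           else (if v = b ∨ v = d then 1 else 0)) := by
      intro u v
      simp only [dd, Prod.mk.injEq]
      by_cases g1 : u = a <;> by_cases g2 : u = c <;> by_cases g3 : v = b <;>
        by_cases g4 : v = d <;> simp_all <;> omega
    rw [delS, Fintype.sum_prod_type]
    simp only [key]
    have step : ∀ u : Fin n,
        (∑ v : Fin n, (if u = a then (if v = d then 0 else 1)
           else if u = c then (if v = b then 0 else 1)
           else (if v = b ∨ v = d then 1 else 0)))
        = (if u = a then n - 1 else if u = c then n - 1 else 2) := by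
      intro u
      by_cases g1 : u = a
      · simp [g1, sum_nept_aux d]
      · by_cases g2 : u = c
        · simp [g1, g2, Ne.symm h1, sum_nept_aux b]
        · have hbd : b ≠ d := h2
          simp [g1, g2, sum_pair_aux b d hbd]
    rw [Finset.sum_congr rfl (fun u _ => step u)]
    have h4 : ∀ u : Fin n, (if u = a then n - 1 else if u = c then n - 1 else 2)
        = 2 + (if u = a then n - 3 else 0) + (if u = c then n - 3 else 0) := by
      intro u
      by_cases g1 : u = a <;> by_cases g2 : u = c <;> simp_all <;> omega
    simp only [h4, Finset.sum_add_distrib, Finset.sum_const, Finset.card_univ,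
      Fintype.card_fin, Finset.sum_ite_eq', Finset.mem_univ, if_true, smul_eq_mul]
    omega
end
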